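/- arXiv:0801.3707 — 7 statements merged into one kernel-verified Lean document; each statement's English description precedes it below -/
import Mathlib

section
/- Given a marked partition (λ, a) of n, define integers b_i by b_i := a_i if a_i ≠ 0, and b_i := max({a_j + λ_i − λ_j : j < i} ∪ {a_j : j ≥ i}) if a_i = 0; set μ_i := b_i and ν_i := λ_i − b_i. Then (μ, ν) is a bi-partition of n (both μ and ν are weakly decreasing sequences of nonnegative integers with |μ| + |ν| = n), and the assignment (λ, a) ↦ (μ, ν) is a bijection from the set of marked partitions of n onto the set of bi-partitions of n. -/
open scoped BigOperators

/-- A partition of `n`: a weakly decreasing sequence of nonnegative integers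
(indexed by `ℕ`) with finite support and total sum `n`. -/
def IsPartitionOf (n : ℕ) (l : ℕ → ℕ) : Prop :=
  Antitone l ∧ (Function.support l).Finite ∧ ∑ᶠ i, l i = n

/-- A marked partition `(λ, a)` of `n`. -/
def IsMarkedPartition (n : ℕ) (l a : ℕ → ℕ) : Prop :=
  IsPartitionOf n l ∧
  (∀ i, a i ≤ l i) ∧
  (∀ i, l (i + 1) = l i → a i = 0) ∧
  (∀ p q, p < q → a p ≠ 0 → a q ≠ 0 →
    a q < a p ∧ a p + l q < a q + l p)

/-- The sequence `b` of the theorem: `b i = a i` if `a i ≠ 0`, and otherwise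
`b i = max ({a j + λ i − λ j : j < i} ∪ {a j : j ≥ i})` (computed in `ℤ`). -/
noncomputable def bSeq (l a : ℕ → ℕ) (i : ℕ) : ℤ :=
  if a i ≠ 0 then (a i : ℤ)
  else sSup ({x : ℤ | ∃ j < i, x = (a j : ℤ) + (l i : ℤ) - (l j : ℤ)} ∪
             {x : ℤ | ∃ j, i ≤ j ∧ x = (a j : ℤ)})

/-- `μ_i := b_i`. -/
noncomputable def muSeq (l a : ℕ → ℕ) (i : ℕ) : ℕ := (bSeq l a i).toNat

/-- `ν_i := λ_i − b_i`. -/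
noncomputable def nuSeq (l a : ℕ → ℕ) (i : ℕ) : ℕ := l i - muSeq l a i

/-- A bi-partition of `n`: a pair of partitions `(μ, ν)` with `|μ| + |ν| = n`. -/
def IsBipartitionOf (n : ℕ) (p : (ℕ → ℕ) × (ℕ → ℕ)) : Prop :=
  Antitone p.1 ∧ (Function.support p.1).Finite ∧
  Antitone p.2 ∧ (Function.support p.2).Finite ∧
  (∑ᶠ i, p.1 i) + (∑ᶠ i, p.2 i) = n

/-!
Write `candidate l a i j := a_j - (λ_j - λ_i)⁺`. For antitone `λ` this is `a_j + λ_i - λ_j` when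
`j < i` and `a_j` when `j ≥ i`, and the conditions on a marking make `a_i` the largest candidate
at every marked `i`; so in all cases `b_i` is the largest of the numbers `candidate l a i j`.
Then `μ_i = b_i` and `ν_i = λ_i - b_i = min_j (max(λ_i, λ_j) - a_j)` are monotone in `λ_i`,
hence antitone in `i`, and `0 ≤ b_i ≤ λ_i`.

The inverse sends `(μ, ν)` to `λ = μ + ν`, marked at the positions `i` where `μ` drops and `ν`
has strictly decreased since every earlier drop of `μ`, with mark `a_i = μ_i`. A marked position is
a drop of `b` after which `λ - b` has strictly decreased, while at an unmarked drop of `b` the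
maximising candidate is an earlier marked position with the same value of `λ - b`. Conversely, for
`μ_i > 0` the first drop `j` of `μ` with `μ_i ≤ μ_j` and `ν_j ≤ ν_i` is a marked position whose
candidate at `i` equals `μ_i`.
-/

namespace MarkedPartition

structure IsMarking (l a : ℕ → ℕ) : Prop where
  antitone : Antitone l
  le : ∀ i, a i ≤ l i
  eq_zero_of_succ_eq : ∀ i, l (i + 1) = l i → a i = 0
  lt_of_lt : ∀ p q, p < q → a p ≠ 0 → a q ≠ 0 → a q < a p ∧ a p + l q < a q + l p

lemma isMarking_of_isMarkedPartition {n : ℕ} {l a : ℕ → ℕ} (h : IsMarkedPartition n l a) :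
    IsMarking l a :=
  ⟨h.1.1, h.2.1, h.2.2.1, h.2.2.2⟩

def candidate (l a : ℕ → ℕ) (i j : ℕ) : ℤ := a j - max ((l j : ℤ) - l i) 0

section candidate

variable (l a : ℕ → ℕ) {i i' j : ℕ}

lemma candidate_le_mark : candidate l a i j ≤ a j := by
  unfold candidate; omega

lemma candidate_le_mark_sub : candidate l a i j ≤ a j - ((l j : ℤ) - l i) := by
  unfold candidate; omega

lemma candidate_of_le (h : l j ≤ l i) : candidate l a i j = a j := by
  unfold candidate; omega

lemma candidate_of_ge (h : l i ≤ l j) : candidate l a i j = a j + l i - l j := by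
  unfold candidate; omega

lemma sub_candidate : (l i : ℤ) - candidate l a i j = max (l i : ℤ) (l j) - a j := by
  unfold candidate; omega

lemma candidate_mono (h : l i' ≤ l i) : candidate l a i' j ≤ candidate l a i j := by
  unfold candidate; omega

end candidate

def IsMarkPosition (μ ν : ℕ → ℕ) (i : ℕ) : Prop :=
  μ (i + 1) < μ i ∧ ∀ j < i, μ (j + 1) < μ j → ν i < ν j

open Classical in
noncomputable def markOf (μ ν : ℕ → ℕ) (i : ℕ) : ℕ := if IsMarkPosition μ ν i then μ i else 0

section markOf

variable {μ ν : ℕ → ℕ} {i : ℕ}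

lemma markOf_of_isMarkPosition (h : IsMarkPosition μ ν i) : markOf μ ν i = μ i :=
  if_pos h

lemma markOf_of_not_isMarkPosition (h : ¬IsMarkPosition μ ν i) : markOf μ ν i = 0 :=
  if_neg h

lemma isMarkPosition_of_markOf_ne_zero (h : markOf μ ν i ≠ 0) : IsMarkPosition μ ν i :=
  not_not.1 (mt markOf_of_not_isMarkPosition h)

end markOf

lemma bSeq_eq_of_ne_zero {l a : ℕ → ℕ} {i : ℕ} (hi : a i ≠ 0) : bSeq l a i = a i :=
  if_pos hi

namespace IsMarking

variable {l a : ℕ → ℕ} (hc : IsMarking l a) {i i' k m : ℕ}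
include hc

lemma succ_lt (hi : a i ≠ 0) : l (i + 1) < l i :=
  (hc.antitone i.le_succ).lt_of_ne fun h => hi (hc.eq_zero_of_succ_eq i h)

lemma lt_of_gt (hi : a i ≠ 0) (hik : i < k) : a k < a i := by
  by_cases hk : a k = 0
  · omega
  · exact (hc.lt_of_lt i k hik hi hk).1

lemma add_lt_add_of_lt (hi : a i ≠ 0) (hki : k < i) : a k + l i < a i + l k := by
  by_cases hk : a k = 0
  · have := hc.antitone hki.le; omega
  · exact (hc.lt_of_lt k i hki hk hi).2

lemma candidate_le_length (j : ℕ) : candidate l a i j ≤ l i := by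
  have := hc.le j
  have := sub_candidate l a (i := i) (j := j)
  omega

lemma candidate_lt_of_ne (hi : a i ≠ 0) (hki : k ≠ i) (m : ℕ) :
    candidate l a m k < a i + max ((l m : ℤ) - l i) 0 := by
  rcases hki.lt_or_gt with hki | hik
  · have := hc.add_lt_add_of_lt hi hki
    have := candidate_le_mark_sub l a (i := m) (j := k)
    omega
  · have := hc.lt_of_gt hi hik
    have := candidate_le_mark l a (i := m) (j := k)
    omega

lemma isGreatest_bSeq (i : ℕ) : IsGreatest (Set.range (candidate l a i)) (bSeq l a i) := by
  by_cases hi : a i = 0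
  · have hset : {x : ℤ | ∃ j < i, x = (a j : ℤ) + (l i : ℤ) - (l j : ℤ)} ∪
        {x : ℤ | ∃ j, i ≤ j ∧ x = (a j : ℤ)} = Set.range (candidate l a i) := by
      ext x
      constructor
      · rintro (⟨j, hj, rfl⟩ | ⟨j, hj, rfl⟩)
        · exact ⟨j, candidate_of_ge l a (hc.antitone hj.le)⟩
        · exact ⟨j, candidate_of_le l a (hc.antitone hj)⟩
      · rintro ⟨j, rfl⟩
        rcases lt_or_ge j i with hj | hj
        · exact Or.inl ⟨j, hj, candidate_of_ge l a (hc.antitone hj.le)⟩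
        · exact Or.inr ⟨j, hj, candidate_of_le l a (hc.antitone hj)⟩
    have hbdd : BddAbove (Set.range (candidate l a i)) :=
      ⟨l i, Set.forall_mem_range.2 hc.candidate_le_length⟩
    rw [bSeq, if_neg (not_not.2 hi), hset]
    exact ⟨Int.csSup_mem (Set.range_nonempty _) hbdd, fun x hx => le_csSup hbdd hx⟩
  · rw [bSeq, if_pos hi]
    refine ⟨⟨i, candidate_of_le l a le_rfl⟩, Set.forall_mem_range.2 fun k => ?_⟩
    rcases eq_or_ne k i with rfl | hki
    · exact (candidate_of_le l a le_rfl).le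
    · simpa using (hc.candidate_lt_of_ne hi hki i).le

lemma candidate_le_bSeq (i j : ℕ) : candidate l a i j ≤ bSeq l a i :=
  (hc.isGreatest_bSeq i).2 ⟨j, rfl⟩

lemma exists_candidate_eq_bSeq (i : ℕ) : ∃ j, candidate l a i j = bSeq l a i :=
  (hc.isGreatest_bSeq i).1

lemma bSeq_nonneg (i : ℕ) : 0 ≤ bSeq l a i := by
  have := hc.candidate_le_bSeq i i
  rw [candidate_of_le l a le_rfl] at this
  omega

lemma bSeq_le (i : ℕ) : bSeq l a i ≤ l i := by
  obtain ⟨j, hj⟩ := hc.exists_candidate_eq_bSeq i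
  exact hj ▸ hc.candidate_le_length j

lemma bSeq_le_bSeq (h : l i' ≤ l i) : bSeq l a i' ≤ bSeq l a i := by
  obtain ⟨j, hj⟩ := hc.exists_candidate_eq_bSeq i'
  exact hj ▸ (candidate_mono l a h).trans (hc.candidate_le_bSeq i j)

lemma sub_bSeq_le_sub_bSeq (h : l i' ≤ l i) :
    (l i' : ℤ) - bSeq l a i' ≤ l i - bSeq l a i := by
  obtain ⟨j, hj⟩ := hc.exists_candidate_eq_bSeq i
  have := hc.candidate_le_bSeq i' j
  have := sub_candidate l a (i := i') (j := j)
  have := sub_candidate l a (i := i) (j := j)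
  omega

lemma bSeq_lt (hi : a i ≠ 0) (hm : l m ≠ l i) :
    bSeq l a m < a i + max ((l m : ℤ) - l i) 0 := by
  obtain ⟨k, hk⟩ := hc.exists_candidate_eq_bSeq m
  rw [← hk]
  rcases eq_or_ne k i with rfl | hki
  · unfold candidate; omega
  · exact hc.candidate_lt_of_ne hi hki m

lemma bSeq_succ_lt (hi : a i ≠ 0) : bSeq l a (i + 1) < bSeq l a i := by
  have hl := hc.succ_lt hi
  have := hc.bSeq_lt hi hl.ne
  rw [bSeq_eq_of_ne_zero hi]
  omega

lemma succ_lt_of_bSeq_succ_lt (h : bSeq l a (i + 1) < bSeq l a i) : l (i + 1) < l i :=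
  (hc.antitone i.le_succ).lt_of_ne fun heq => h.not_ge (hc.bSeq_le_bSeq heq.ge)

lemma exists_lt_sub_bSeq_eq (hi : a i = 0) (hd : bSeq l a (i + 1) < bSeq l a i) :
    ∃ k < i, bSeq l a (k + 1) < bSeq l a k ∧ (l k : ℤ) - bSeq l a k = l i - bSeq l a i := by
  obtain ⟨k, hk⟩ := hc.exists_candidate_eq_bSeq i
  have hak : a k ≠ 0 := by
    have := hc.bSeq_nonneg (i + 1)
    have := candidate_le_mark l a (i := i) (j := k)
    omega
  have hki : k < i := by
    by_contra! hik
    have hik : i + 1 ≤ k := lt_of_le_of_ne hik fun h => hak (h ▸ hi)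
    have := hc.candidate_le_bSeq (i + 1) k
    rw [candidate_of_le l a (hc.antitone hik)] at this
    rw [← hk, candidate_of_le l a (hc.antitone (i.le_succ.trans hik))] at hd
    omega
  refine ⟨k, hki, hc.bSeq_succ_lt hak, ?_⟩
  rw [bSeq_eq_of_ne_zero hak, ← hk, candidate_of_ge l a (hc.antitone hki.le)]
  ring

lemma muSeq_cast (i : ℕ) : (muSeq l a i : ℤ) = bSeq l a i :=
  Int.toNat_of_nonneg (hc.bSeq_nonneg i)

lemma muSeq_add_nuSeq (i : ℕ) : muSeq l a i + nuSeq l a i = l i := by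
  have := hc.muSeq_cast i
  have := hc.bSeq_le i
  unfold nuSeq
  omega

lemma nuSeq_cast (i : ℕ) : (nuSeq l a i : ℤ) = l i - bSeq l a i := by
  have := hc.muSeq_cast i
  have := hc.muSeq_add_nuSeq i
  omega

lemma antitone_muSeq : Antitone (muSeq l a) := fun _ _ h => Nat.cast_le.1 (by
  rw [hc.muSeq_cast, hc.muSeq_cast]; exact hc.bSeq_le_bSeq (hc.antitone h))

lemma antitone_nuSeq : Antitone (nuSeq l a) := fun _ _ h => Nat.cast_le.1 (by
  rw [hc.nuSeq_cast, hc.nuSeq_cast]; exact hc.sub_bSeq_le_sub_bSeq (hc.antitone h))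

lemma isMarkPosition_iff (i : ℕ) :
    IsMarkPosition (muSeq l a) (nuSeq l a) i ↔ bSeq l a (i + 1) < bSeq l a i ∧
      ∀ j < i, bSeq l a (j + 1) < bSeq l a j →
        (l i : ℤ) - bSeq l a i < l j - bSeq l a j := by
  simp only [IsMarkPosition, ← Nat.cast_lt (α := ℤ), hc.muSeq_cast, hc.nuSeq_cast]

lemma ne_zero_iff_isMarkPosition (i : ℕ) :
    a i ≠ 0 ↔ IsMarkPosition (muSeq l a) (nuSeq l a) i := by
  rw [hc.isMarkPosition_iff]
  refine ⟨fun hi => ⟨hc.bSeq_succ_lt hi, fun j hji hd => ?_⟩, fun ⟨hd, hdrops⟩ hi => ?_⟩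
  · have hlt : l i < l j := (hc.antitone hji).trans_lt (hc.succ_lt_of_bSeq_succ_lt hd)
    have := hc.bSeq_lt hi hlt.ne'
    rw [bSeq_eq_of_ne_zero hi]
    omega
  · obtain ⟨k, hki, hdk, heq⟩ := hc.exists_lt_sub_bSeq_eq hi hd
    exact (hdrops k hki hdk).ne heq.symm

lemma markOf_muSeq_nuSeq : markOf (muSeq l a) (nuSeq l a) = a := funext fun i => by
  by_cases hi : a i = 0
  · rw [markOf_of_not_isMarkPosition (mt (hc.ne_zero_iff_isMarkPosition i).2 (not_not.2 hi)), hi]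
  · have := hc.muSeq_cast i
    rw [markOf_of_isMarkPosition ((hc.ne_zero_iff_isMarkPosition i).1 hi)]
    rw [bSeq_eq_of_ne_zero hi] at this
    omega

end IsMarking

lemma isBipartitionOf_muSeq_nuSeq {n : ℕ} {l a : ℕ → ℕ} (h : IsMarkedPartition n l a) :
    IsBipartitionOf n (muSeq l a, nuSeq l a) := by
  have hc := isMarking_of_isMarkedPartition h
  obtain ⟨⟨-, hfin, hsum⟩, -⟩ := h
  have hμ : (Function.support (muSeq l a)).Finite := hfin.subset fun i hi => by
    have := hc.muSeq_add_nuSeq i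
    simp only [Function.mem_support] at hi ⊢
    omega
  have hν : (Function.support (nuSeq l a)).Finite := hfin.subset fun i hi => by
    have := hc.muSeq_add_nuSeq i
    simp only [Function.mem_support] at hi ⊢
    omega
  refine ⟨hc.antitone_muSeq, hμ, hc.antitone_nuSeq, hν, ?_⟩
  rw [← finsum_add_distrib hμ hν, ← hsum]
  exact finsum_congr hc.muSeq_add_nuSeq

section inverse

variable {μ ν : ℕ → ℕ} {i j : ℕ}

lemma le_candidate_add_markOf (hj : IsMarkPosition μ ν j) (hνj : ν j ≤ ν i) (hμj : μ i ≤ μ j) :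
    μ i ≤ candidate (μ + ν) (markOf μ ν) i j := by
  simp only [candidate, markOf_of_isMarkPosition hj, Pi.add_apply, Nat.cast_add]
  omega

variable (hμ : Antitone μ) (hν : Antitone ν)
include hμ hν

lemma isMarking_add_markOf : IsMarking (μ + ν) (markOf μ ν) where
  antitone := hμ.add hν
  le i := by
    by_cases h : IsMarkPosition μ ν i
    · simp [markOf_of_isMarkPosition h]
    · simp [markOf_of_not_isMarkPosition h]
  eq_zero_of_succ_eq i heq := markOf_of_not_isMarkPosition fun h => by
    have := h.1
    have : ν (i + 1) ≤ ν i := hν (Nat.le_add_right i 1)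
    simp only [Pi.add_apply] at heq
    omega
  lt_of_lt p q hpq hp hq := by
    have hp := isMarkPosition_of_markOf_ne_zero hp
    have hq := isMarkPosition_of_markOf_ne_zero hq
    have := hp.1
    have := hq.2 p hpq hp.1
    have : μ q ≤ μ (p + 1) := hμ hpq
    rw [markOf_of_isMarkPosition hp, markOf_of_isMarkPosition hq]
    simp only [Pi.add_apply]
    omega

lemma candidate_add_markOf_le (i j : ℕ) : candidate (μ + ν) (markOf μ ν) i j ≤ μ i := by
  by_cases h : IsMarkPosition μ ν j
  · have := candidate_le_mark (μ + ν) (markOf μ ν) (i := i) (j := j)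
    have := candidate_le_mark_sub (μ + ν) (markOf μ ν) (i := i) (j := j)
    simp only [markOf_of_isMarkPosition h, Pi.add_apply, Nat.cast_add] at *
    rcases le_total i j with hij | hji
    · have := hμ hij; omega
    · have := hν hji; omega
  · have := candidate_le_mark (μ + ν) (markOf μ ν) (i := i) (j := j)
    rw [markOf_of_not_isMarkPosition h] at this
    omega

lemma exists_isMarkPosition (hμf : (Function.support μ).Finite) (hi : μ i ≠ 0) :
    ∃ j, IsMarkPosition μ ν j ∧ ν j ≤ ν i ∧ μ i ≤ μ j := by
  classical
  have hbelow : ∃ m, μ m < μ i := by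
    obtain ⟨m, hm⟩ := hμf.exists_notMem
    exact ⟨m, by rw [Function.notMem_support.1 hm]; omega⟩
  obtain ⟨m, hm, hmin⟩ : ∃ m, μ m < μ i ∧ ∀ k < m, μ i ≤ μ k :=
    ⟨Nat.find hbelow, Nat.find_spec hbelow, fun k hk => not_lt.1 (Nat.find_min hbelow hk)⟩
  obtain ⟨k, rfl⟩ : ∃ k, m = k + 1 := Nat.exists_eq_add_one.2 (by
    by_contra! h
    have := hμ (h.trans (Nat.zero_le i)); omega)
  have hik : i ≤ k := by
    by_contra! h
    have : μ i ≤ μ (k + 1) := hμ h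
    omega
  have hP : ∃ j, μ (j + 1) < μ j ∧ ν j ≤ ν i ∧ μ i ≤ μ j :=
    ⟨k, by have := hmin k k.lt_succ_self; omega, hν hik, hmin k k.lt_succ_self⟩
  obtain ⟨hdrop, hνj, hμj⟩ := Nat.find_spec hP
  refine ⟨Nat.find hP, ⟨hdrop, fun k hk hdk => ?_⟩, hνj, hμj⟩
  have := Nat.find_min hP hk
  have := hμ hk.le
  omega

lemma bSeq_add_markOf (hμf : (Function.support μ).Finite) (i : ℕ) :
    bSeq (μ + ν) (markOf μ ν) i = μ i := by
  have hc := isMarking_add_markOf hμ hν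
  apply le_antisymm
  · obtain ⟨j, hj⟩ := hc.exists_candidate_eq_bSeq i
    exact hj ▸ candidate_add_markOf_le hμ hν i j
  · rcases eq_or_ne (μ i) 0 with h0 | hi
    · exact h0 ▸ hc.bSeq_nonneg i
    · obtain ⟨j, hj, hνj, hμj⟩ := exists_isMarkPosition hμ hν hμf hi
      exact (le_candidate_add_markOf hj hνj hμj).trans (hc.candidate_le_bSeq i j)

lemma muSeq_add_markOf (hμf : (Function.support μ).Finite) : muSeq (μ + ν) (markOf μ ν) = μ :=
  funext fun i => by rw [muSeq, bSeq_add_markOf hμ hν hμf i, Int.toNat_natCast]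

lemma nuSeq_add_markOf (hμf : (Function.support μ).Finite) : nuSeq (μ + ν) (markOf μ ν) = ν :=
  funext fun i => by rw [nuSeq, muSeq_add_markOf hμ hν hμf, Pi.add_apply, Nat.add_sub_cancel_left]

end inverse

lemma isMarkedPartition_add_markOf {n : ℕ} {μ ν : ℕ → ℕ} (h : IsBipartitionOf n (μ, ν)) :
    IsMarkedPartition n (μ + ν) (markOf μ ν) := by
  obtain ⟨hμ, hμf, hν, hνf, hsum⟩ := h
  have hc := isMarking_add_markOf hμ hν
  refine ⟨⟨hc.antitone, (hμf.union hνf).subset fun i hi => ?_, ?_⟩,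
    hc.le, hc.eq_zero_of_succ_eq, hc.lt_of_lt⟩
  · simp only [Function.mem_support, Pi.add_apply, Set.mem_union] at hi ⊢
    omega
  · rw [← hsum]
    exact finsum_add_distrib hμf hνf

end MarkedPartition

/-- The assignment `(λ, a) ↦ (μ, ν)` maps marked partitions of `n` to
bi-partitions of `n`, and is a bijection between these two sets. -/
theorem markedPartition_to_bipartition_bijOn (n : ℕ) :
    Set.BijOn (fun p : (ℕ → ℕ) × (ℕ → ℕ) => (muSeq p.1 p.2, nuSeq p.1 p.2))
      {p | IsMarkedPartition n p.1 p.2} {q | IsBipartitionOf n q} := by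
  refine Set.InvOn.bijOn (f' := fun q => (q.1 + q.2, MarkedPartition.markOf q.1 q.2))
    ⟨?_, ?_⟩ ?_ ?_
  · rintro ⟨l, a⟩ h
    have hc := MarkedPartition.isMarking_of_isMarkedPartition h
    exact Prod.ext (funext hc.muSeq_add_nuSeq) hc.markOf_muSeq_nuSeq
  · rintro ⟨μ, ν⟩ ⟨hμ, hμf, hν, -⟩
    exact Prod.ext (MarkedPartition.muSeq_add_markOf hμ hν hμf)
      (MarkedPartition.nuSeq_add_markOf hμ hν hμf)
  · rintro ⟨l, a⟩ h
    exact MarkedPartition.isBipartitionOf_muSeq_nuSeq h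
  · rintro ⟨μ, ν⟩ h
    exact MarkedPartition.isMarkedPartition_add_markOf h
end

section
/- Let R be a commutative ring and Y an arbitrary n×n matrix over R. Then in R[t] one has det(t·J − [[0, −Y], [Yᵀ, 0]]) = det(t·1ₙ − Y)², where [[0,−Y],[Yᵀ,0]] is the 2n×2n block matrix with upper-right block −Y and lower-left block Yᵀ. -/
/-!
The matrix `t·J − [[0, −Y], [Yᵀ, 0]]` equals `[[0, −A], [Aᵀ, 0]]` with `A = t·1 − Y`, and this
factors as `J · diag(Aᵀ, A)`. Since `J` is a product of three unipotent block-triangular matrices,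
`det J = 1`, so the determinant is `det Aᵀ · det A = (det A)²`.
-/

open Matrix Polynomial

/-- The standard symplectic form matrix `J = [[0, −1ₙ], [1ₙ, 0]]`. -/
def Jmat (n : ℕ) (R : Type*) [CommRing R] :
    Matrix (Fin n ⊕ Fin n) (Fin n ⊕ Fin n) R :=
  Matrix.fromBlocks 0 (-1) 1 0

namespace Matrix

variable {l R : Type*} [Fintype l] [DecidableEq l] [CommRing R]

theorem det_fromBlocks_zero_neg_one_one_zero :
    (fromBlocks 0 (-1) 1 0 : Matrix (l ⊕ l) (l ⊕ l) R).det = 1 := by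
  have factor : (fromBlocks 0 (-1) 1 0 : Matrix (l ⊕ l) (l ⊕ l) R) =
      fromBlocks 1 (-1) 0 1 * fromBlocks 1 0 1 1 * fromBlocks 1 (-1) 0 1 := by
    simp [fromBlocks_multiply]
  rw [factor, det_mul, det_mul, det_fromBlocks_zero₂₁, det_fromBlocks_zero₁₂]
  simp

theorem det_fromBlocks_zero_neg_transpose_zero (A : Matrix l l R) :
    (fromBlocks 0 (-A) Aᵀ 0).det = A.det ^ 2 := by
  have factor : fromBlocks 0 (-A) Aᵀ 0 = fromBlocks 0 (-1) 1 0 * fromBlocks Aᵀ 0 0 A := by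
    simp [fromBlocks_multiply]
  rw [factor, det_mul, det_fromBlocks_zero_neg_one_one_zero, det_fromBlocks_zero₂₁,
    det_transpose, one_mul, sq]

end Matrix

theorem det_tJ_sub_antidiag_blocks_general {n : ℕ} {R : Type*} [CommRing R]
    (Y : Matrix (Fin n) (Fin n) R) :
    ((X : R[X]) • Jmat n R[X] -
      (Matrix.fromBlocks 0 (-Y) Yᵀ 0).map (Polynomial.C : R → R[X])).det =
    ((X : R[X]) • (1 : Matrix (Fin n) (Fin n) R[X]) -
      Y.map (Polynomial.C : R → R[X])).det ^ 2 := by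
  set A := (X : R[X]) • (1 : Matrix (Fin n) (Fin n) R[X]) - Y.map C
  have blocks :
      (X : R[X]) • Jmat n R[X] - (fromBlocks 0 (-Y) Yᵀ 0).map C = fromBlocks 0 (-A) Aᵀ 0 := by
    simp only [A, Jmat, fromBlocks_map, fromBlocks_smul, sub_eq_add_neg, fromBlocks_neg,
      fromBlocks_add]
    congr 1 <;> simp [transpose_map, Matrix.map_neg, add_comm]
  rw [blocks, det_fromBlocks_zero_neg_transpose_zero]

/-- `det(t·J − [[0, −Y], [Yᵀ, 0]]) = det(t·1ₙ − Y)²` in `R[t]`. -/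
theorem det_tJ_sub_antidiag_blocks {n : ℕ} (hn : 1 ≤ n) {R : Type*} [CommRing R]
    (Y : Matrix (Fin n) (Fin n) R) :
    ((X : R[X]) • Jmat n R[X] -
      (Matrix.fromBlocks 0 (-Y) Yᵀ 0).map (Polynomial.C : R → R[X])).det =
    ((X : R[X]) • (1 : Matrix (Fin n) (Fin n) R[X]) -
      Y.map (Polynomial.C : R → R[X])).det ^ 2 :=
  det_tJ_sub_antidiag_blocks_general Y
end

section
/- Let v ∈ ℂ^{2n} and let X be an alternating 2n×2n complex matrix. Then the following are equivalent: (i) f(v, X) = 0 for every polynomial function f on ℂ^{2n} × {alternating 2n×2n complex matrices} satisfying f(g w, g Y gᵀ) = f(w, Y) for all g ∈ Sp(2n, ℂ), all w ∈ ℂ^{2n} and all alternating Y, and f(0, 0) = 0; (ii) the matrix X·J is nilpotent. (Thus the Hilbert nilcone 𝔑 of the Sp(2n)-module 𝕍 = ℂ^{2n} ⊕ ∧²ℂ^{2n} is, as a set, ℂ^{2n} × {X alternating : X·J nilpotent}.) -/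
/-!
Write `A = M J`. Since `M` is alternating, `A` is self-adjoint for the symplectic form
`ω(x, y) = xᵀ J y`, and `(g M gᵀ) J` is conjugate to `M J` for every symplectic `g`.

If every invariant vanishing at `(0, 0)` vanishes at `(v, M)`, then each coefficient of the
characteristic polynomial of `Y J`, an invariant, takes the same value at `(v, M)` as at `(0, 0)`;
so `charpoly A = X ^ 2n` and `A` is nilpotent.

Conversely, let `A` be nilpotent. Repeatedly adjoining `Aᵐ x`, where `x` is orthogonal to the
current isotropic subspace `W` and `m` is largest with `Aᵐ x ∉ W`, first with `x = v`, builds a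
Lagrangian subspace containing `v` with a basis `e₁, …, eₙ` such that `A eⱼ ∈ span {eᵢ | i > j}`.
Completing it to a symplectic basis `(e, f)`, the one-parameter subgroup of `Sp(2n)` acting by `tⁱ`
on `eᵢ` and by `t⁻ⁱ` on `fᵢ` has only positive weights on `(v, M)`. Hence for an invariant `P`,
`t ↦ P(t • (v, M))` is a polynomial in `t`, constant for `t ≠ 0`, whose value at `t = 0` is
`P(0, 0)`.
-/

open Matrix

open Module Submodule Set

lemma eq_zero_of_eq_neg {R : Type*} [Ring R] [NoZeroDivisors R] [NeZero (2 : R)] {a : R}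
    (h : a = -a) : a = 0 :=
  (mul_eq_zero.mp (show (2 : R) * a = 0 by rw [two_mul]; nth_rw 2 [h]; exact add_neg_cancel a)
    ).resolve_left two_ne_zero

lemma LinearMap.IsAdjointPair.pow {K V : Type*} [CommSemiring K] [AddCommMonoid V] [Module K V]
    {B : LinearMap.BilinForm K V} {A : Module.End K V} (hA : IsAdjointPair B B A A) (m : ℕ) :
    IsAdjointPair B B ⇑(A ^ m) ⇑(A ^ m) := by
  induction m with
  | zero => exact isAdjointPair_one
  | succ m ih =>
    have := ih.mul hA
    rwa [← pow_succ, ← pow_succ'] at this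

namespace LinearMap.BilinForm

variable {K V : Type*} [Field K] [AddCommGroup V] [Module K V] {B : LinearMap.BilinForm K V}

lemma mem_orthogonal_span_iff {s : Set V} {x : V} :
    x ∈ B.orthogonal (span K s) ↔ ∀ y ∈ s, B y x = 0 :=
  ⟨fun h y hy => h y (subset_span hy),
    fun h _ hw => (span_le (p := LinearMap.ker (B.flip x)) |>.mpr h) hw⟩

lemma apply_mem_orthogonal {A : Module.End K V} (hA : IsAdjointPair B B A A) {W : Submodule K V}
    (hW : ∀ w ∈ W, A w ∈ W) {x : V} (hx : x ∈ B.orthogonal W) : A x ∈ B.orthogonal W :=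
  fun w hw => by rw [← hA]; exact hx _ (hW w hw)

lemma apply_pow_apply_self_eq_zero [NeZero (2 : K)] (hB : B.IsAlt) {A : Module.End K V}
    (hA : IsAdjointPair B B A A) (m : ℕ) (x : V) : B ((A ^ m) x) x = 0 :=
  eq_zero_of_eq_neg ((hA.pow m x x).trans (hB.neg_eq _ _).symm)

variable (B) in
structure IsIsotropicFlag (A : Module.End K V) {k : ℕ} (e : Fin k → V) : Prop where
  linearIndependent : LinearIndependent K e
  isotropic : ∀ i j, B (e i) (e j) = 0
  apply_mem_span : ∀ j, A (e j) ∈ span K (e '' Ioi j)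

lemma isIsotropicFlag_elim0 {A : Module.End K V} :
    IsIsotropicFlag B A (Fin.elim0 : Fin 0 → V) :=
  ⟨linearIndependent_empty_type, fun i => i.elim0, fun i => i.elim0⟩

namespace IsIsotropicFlag

variable {A : Module.End K V} {k : ℕ} {e : Fin k → V}

lemma finrank_span (h : IsIsotropicFlag B A e) : finrank K (span K (Set.range e)) = k := by
  rw [finrank_span_eq_card h.linearIndependent, Fintype.card_fin]

lemma span_le_orthogonal (h : IsIsotropicFlag B A e) :
    span K (Set.range e) ≤ B.orthogonal (span K (Set.range e)) := by
  rw [span_le]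
  rintro _ ⟨j, rfl⟩
  exact mem_orthogonal_span_iff.mpr (by rintro _ ⟨i, rfl⟩; exact h.isotropic i j)

lemma apply_mem_span_range (h : IsIsotropicFlag B A e) {w : V} (hw : w ∈ span K (Set.range e)) :
    A w ∈ span K (Set.range e) := by
  have : span K (Set.range e) ≤ (span K (Set.range e)).comap A := by
    rw [span_le]
    rintro _ ⟨j, rfl⟩
    exact span_mono (image_subset_range _ _) (h.apply_mem_span j)
  exact this hw

lemma cons (hB : B.IsAlt) (h : IsIsotropicFlag B A e) {y : V}
    (hy : y ∉ span K (Set.range e)) (hyo : y ∈ B.orthogonal (span K (Set.range e)))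
    (hAy : A y ∈ span K (Set.range e)) :
    IsIsotropicFlag B A (Fin.cons y e : Fin (k + 1) → V) where
  linearIndependent := linearIndependent_finCons.mpr ⟨h.linearIndependent, hy⟩
  isotropic i j := by
    have hey : ∀ i, B (e i) y = 0 := fun i => hyo _ (subset_span ⟨i, rfl⟩)
    cases i using Fin.cases <;> cases j using Fin.cases <;>
      simp [hB.self_eq_zero, hey, hB.eq_iff.mp (hey _), h.isotropic]
  apply_mem_span j := by
    cases j using Fin.cases with
    | zero =>
      refine span_mono ?_ hAy
      rintro _ ⟨i, rfl⟩
      exact ⟨i.succ, Fin.succ_pos i, Fin.cons_succ _ _ _⟩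
    | succ j =>
      rw [Fin.cons_succ]
      refine span_mono ?_ (h.apply_mem_span j)
      rintro _ ⟨i, hi, rfl⟩
      exact ⟨i.succ, Fin.succ_lt_succ_iff.mpr hi, Fin.cons_succ _ _ _⟩

lemma exists_extend_mem_span [NeZero (2 : K)] (hB : B.IsAlt) (hA : IsAdjointPair B B A A)
    (hnil : IsNilpotent A) (h : IsIsotropicFlag B A e) {x : V}
    (hx : x ∈ B.orthogonal (span K (Set.range e))) :
    ∃ (k' : ℕ) (e' : Fin k' → V), IsIsotropicFlag B A e' ∧
      span K (Set.range e) ≤ span K (Set.range e') ∧ x ∈ span K (Set.range e') := by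
  obtain ⟨N, hN⟩ := hnil
  have hxN : (A ^ N) x ∈ span K (Set.range e) := by simp [hN]
  clear hN
  induction N generalizing k e with
  | zero => exact ⟨k, e, h, le_rfl, by simpa using hxN⟩
  | succ m ih =>
    by_cases hy : (A ^ m) x ∈ span K (Set.range e)
    · exact ih h hx hy
    have hcons := h.cons hB hy
      (Module.End.pow_apply_mem_of_forall_mem m
        (fun _ => apply_mem_orthogonal hA fun _ => h.apply_mem_span_range) x hx)
      (by rwa [← Module.End.mul_apply, ← pow_succ'])
    have hx' : x ∈ B.orthogonal (span K (Set.range (Fin.cons ((A ^ m) x) e))) := by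
      rw [mem_orthogonal_span_iff, Fin.range_cons]
      rintro _ (rfl | ⟨i, rfl⟩)
      · exact apply_pow_apply_self_eq_zero hB hA m x
      · exact hx _ (subset_span ⟨i, rfl⟩)
    obtain ⟨k', e', h', hle, hxe'⟩ := ih hcons hx' (subset_span (by simp [Fin.range_cons]))
    exact ⟨k', e', h', le_trans (span_mono (by simp [Fin.range_cons])) hle, hxe'⟩

end IsIsotropicFlag

lemma linearIndependent_of_det_ne_zero {ι : Type*} [Fintype ι] [DecidableEq ι] {u : ι → V}
    (h : (Matrix.of fun p q => B (u p) (u q)).det ≠ 0) : LinearIndependent K u := by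
  rw [Fintype.linearIndependent_iff]
  intro c hc
  have : c ᵥ* Matrix.of (fun p q => B (u p) (u q)) = 0 := by
    ext q
    simpa [vecMul, dotProduct] using congrArg (B · (u q)) hc
  exact congrFun (eq_zero_of_vecMul_eq_zero h this)

variable [FiniteDimensional K V]

lemma two_mul_finrank_le_of_le_orthogonal (hB : B.Nondegenerate) {W : Submodule K V}
    (hW : W ≤ B.orthogonal W) : 2 * finrank K W ≤ finrank K V := by
  have := Submodule.finrank_mono hW
  rw [finrank_orthogonal hB] at this
  omega

lemma exists_mem_orthogonal_notMem (hB : B.Nondegenerate) {W : Submodule K V}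
    (hW : W ≤ B.orthogonal W) (hlt : 2 * finrank K W < finrank K V) :
    ∃ x ∈ B.orthogonal W, x ∉ W := by
  refine SetLike.exists_of_lt (lt_of_le_of_ne hW fun h => ?_)
  have := finrank_orthogonal hB W
  rw [← h] at this
  omega

lemma surjective_pi_apply (hB : B.Nondegenerate) {k : ℕ} {e : Fin k → V}
    (he : LinearIndependent K e) : Function.Surjective (LinearMap.pi fun i => B (e i)) := by
  set φ := LinearMap.pi fun i => B (e i)
  have hker : LinearMap.ker φ = B.orthogonal (span K (Set.range e)) := by
    ext x
    rw [LinearMap.mem_ker, mem_orthogonal_span_iff]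
    simp [φ, funext_iff]
  have hrank := LinearMap.finrank_range_add_finrank_ker φ
  rw [hker, finrank_orthogonal hB, finrank_span_eq_card he] at hrank
  have := finrank_span_eq_card he ▸ Submodule.finrank_le (span K (Set.range e))
  rw [← LinearMap.range_eq_top]
  apply Submodule.eq_top_of_finrank_eq
  simp only [Fintype.card_fin, finrank_fin_fun] at hrank this ⊢
  omega

theorem exists_isIsotropicFlag_two_mul_eq_finrank [NeZero (2 : K)] (hB : B.IsAlt)
    (hBnd : B.Nondegenerate) {A : Module.End K V} (hA : IsAdjointPair B B A A)
    (hnil : IsNilpotent A) (v : V) :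
    ∃ (k : ℕ) (e : Fin k → V), IsIsotropicFlag B A e ∧ 2 * k = finrank K V ∧
      v ∈ span K (Set.range e) := by
  classical
  let P k := ∃ e : Fin k → V, IsIsotropicFlag B A e ∧ v ∈ span K (Set.range e)
  have hbound : ∀ {k} {e : Fin k → V}, IsIsotropicFlag B A e → 2 * k ≤ finrank K V :=
    fun h => h.finrank_span ▸ two_mul_finrank_le_of_le_orthogonal hBnd h.span_le_orthogonal
  obtain ⟨k₀, e₀, h₀, -, hv₀⟩ :=
    isIsotropicFlag_elim0.exists_extend_mem_span hB hA hnil (x := v) (by simp)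
  set k := Nat.findGreatest P (finrank K V)
  obtain ⟨e, h, hv⟩ : P k := Nat.findGreatest_spec (by linarith [hbound h₀]) ⟨e₀, h₀, hv₀⟩
  refine ⟨k, e, h, (hbound h).antisymm (not_lt.mp fun hlt => ?_), hv⟩
  obtain ⟨x, hxo, hxe⟩ := exists_mem_orthogonal_notMem hBnd h.span_le_orthogonal
    (by rwa [h.finrank_span])
  obtain ⟨k', e', h', hle, hx⟩ := h.exists_extend_mem_span hB hA hnil hxo
  have hk : k < k' := by
    simpa [h.finrank_span, h'.finrank_span] using
      Submodule.finrank_lt_finrank_of_lt (lt_of_le_of_ne hle fun heq => hxe (heq ▸ hx))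
  exact Nat.findGreatest_is_greatest hk (by linarith [hbound h']) ⟨e', h', hle hv⟩

lemma exists_isotropic_dual [NeZero (2 : K)] (hB : B.IsAlt) (hBnd : B.Nondegenerate) {k : ℕ}
    {e : Fin k → V} (he : LinearIndependent K e) (hiso : ∀ i j, B (e i) (e j) = 0) :
    ∃ f : Fin k → V, (∀ i j, B (e i) (f j) = -(1 : Matrix (Fin k) (Fin k) K) i j) ∧
      ∀ i j, B (f i) (f j) = 0 := by
  choose f₀ hf₀ using fun j =>
    surjective_pi_apply hBnd he fun i => -(1 : Matrix (Fin k) (Fin k) K) i j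
  have hef₀ : ∀ i j, B (e i) (f₀ j) = -(1 : Matrix (Fin k) (Fin k) K) i j :=
    fun i j => congrFun (hf₀ j) i
  have hf₀e : ∀ i j, B (f₀ i) (e j) = (1 : Matrix (Fin k) (Fin k) K) i j := fun i j => by
    rw [← hB.neg_eq, hef₀, neg_neg]
    simp [one_apply, eq_comm]
  -- with `S = ω(f₀ ·, f₀ ·)` antisymmetric, `ω(fᵢ, fⱼ) = Sᵢⱼ - ½ Sᵢⱼ + ½ Sⱼᵢ = 0`
  refine ⟨fun j => f₀ j - (2⁻¹ : K) • ∑ l, B (f₀ l) (f₀ j) • e l, fun i j => by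
    simp [hiso, hef₀], fun i j => ?_⟩
  have hanti := hB.neg_eq (f₀ i) (f₀ j)
  have htwo : (2 : K) * 2⁻¹ = 1 := mul_inv_cancel₀ two_ne_zero
  simp only [map_sub, map_smul, map_sum, LinearMap.sub_apply, hf₀e, one_apply, smul_eq_mul,
    mul_ite, mul_one, mul_zero, Finset.sum_ite_eq, Finset.mem_univ, ↓reduceIte, smul_apply, coe_sum,
    coe_smul, Finset.sum_apply, Pi.smul_apply, hef₀, hiso, Finset.sum_const_zero, sub_zero, mul_neg,
    Finset.sum_neg_distrib, Finset.sum_ite_eq', sub_neg_eq_add]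
  linear_combination (-(2 : K)⁻¹) * hanti - B (f₀ i) (f₀ j) * htwo

theorem exists_basis_toMatrix_eq_J [NeZero (2 : K)] (hB : B.IsAlt) (hBnd : B.Nondegenerate)
    {n : ℕ} (hV : finrank K V = 2 * n) {e : Fin n → V} (he : LinearIndependent K e)
    (hiso : ∀ i j, B (e i) (e j) = 0) :
    ∃ b : Basis (Fin n ⊕ Fin n) K V, (∀ i, b (Sum.inl i) = e i) ∧
      LinearMap.BilinForm.toMatrix b B = J (Fin n) K := by
  obtain ⟨f, hef, hff⟩ := exists_isotropic_dual hB hBnd he hiso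
  have hfe : ∀ i j, B (f i) (e j) = (1 : Matrix (Fin n) (Fin n) K) i j := fun i j => by
    rw [← hB.neg_eq, hef, neg_neg]
    simp [one_apply, eq_comm]
  have hgram : ∀ p q, B (Sum.elim e f p) (Sum.elim e f q) = J (Fin n) K p q := by
    rintro (i | i) (j | j) <;> simp [J, hiso, hef, hfe, hff]
  have hli : LinearIndependent K (Sum.elim e f) := linearIndependent_of_det_ne_zero (B := B) (by
    convert (isUnit_det_J (Fin n) K).ne_zero using 2
    exact Matrix.ext hgram)
  refine ⟨basisOfLinearIndependentOfCardEqFinrank' _ hli (by simp [hV]; ring), fun i => by simp,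
    ?_⟩
  ext p q
  simp [LinearMap.BilinForm.toMatrix_apply, hgram]

end LinearMap.BilinForm

namespace Matrix

lemma isAlt_toBilin' {K ι : Type*} [Field K] [NeZero (2 : K)] [Fintype ι] [DecidableEq ι]
    {M : Matrix ι ι K} (hM : Mᵀ = -M) : (toBilin' M).IsAlt := fun x =>
  eq_zero_of_eq_neg <| calc
    toBilin' M x x = (Mᵀ *ᵥ x) ⬝ᵥ x := by rw [toBilin'_apply', dotProduct_mulVec, mulVec_transpose]
    _ = -toBilin' M x x := by rw [hM, neg_mulVec, neg_dotProduct, dotProduct_comm, toBilin'_apply']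

lemma mul_J_apply_inl {R ι : Type*} [CommRing R] {n : ℕ} (X : Matrix ι (Fin n ⊕ Fin n) R)
    (p : ι) (j : Fin n) : (X * J (Fin n) R) p (Sum.inl j) = X p (Sum.inr j) := by
  simp [J, mul_apply, Fintype.sum_sum_type, one_apply]

lemma charpoly_mul_J_conj {R : Type*} [CommRing R] {n : ℕ}
    {g : Matrix (Fin n ⊕ Fin n) (Fin n ⊕ Fin n) R} (hg : g * J (Fin n) R * gᵀ = J (Fin n) R)
    (Y : Matrix (Fin n ⊕ Fin n) (Fin n ⊕ Fin n) R) :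
    (g * Y * gᵀ * J (Fin n) R).charpoly = (Y * J (Fin n) R).charpoly := by
  have hg' := SymplecticGroup.mem_iff'.mp (SymplecticGroup.mem_iff.mpr hg)
  rw [Matrix.mul_assoc, Matrix.mul_assoc, charpoly_mul_comm, Matrix.mul_assoc, hg']

-- the weights of the one-parameter subgroup `t ↦ diag(t, …, tⁿ, t⁻¹, …, t⁻ⁿ)` of `Sp(2n)`
def symplecticWeight (n : ℕ) : Fin n ⊕ Fin n → ℤ :=
  Sum.elim (fun i => i + 1) fun i => -(i + 1)

lemma symplecticWeight_add_eq_zero {R : Type*} [CommRing R] {n : ℕ} {p q : Fin n ⊕ Fin n}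
    (h : J (Fin n) R p q ≠ 0) : symplecticWeight n p + symplecticWeight n q = 0 := by
  rcases p with i | i <;> rcases q with j | j <;> simp [J, one_apply] at h <;>
    simp [symplecticWeight, h.1]

lemma diagonal_zpow_symplecticWeight_mem {K : Type*} [Field K] {n : ℕ} {t : K} (ht : t ≠ 0) :
    diagonal (fun p => t ^ symplecticWeight n p) ∈ symplecticGroup (Fin n) K := by
  rw [SymplecticGroup.mem_iff, diagonal_transpose]
  ext p q
  rw [mul_diagonal, diagonal_mul]
  by_cases hJ : J (Fin n) K p q = 0
  · simp [hJ]
  · rw [mul_right_comm, ← zpow_add₀ ht, symplecticWeight_add_eq_zero hJ, zpow_zero, one_mul]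

lemma symplecticWeight_add_pos {R : Type*} [CommRing R] {n : ℕ}
    {N : Matrix (Fin n ⊕ Fin n) (Fin n ⊕ Fin n) R} (hN : Nᵀ = -N)
    (hcol : ∀ p j, N p (Sum.inr j) ≠ 0 → ∃ i, j < i ∧ p = Sum.inl i) {p q : Fin n ⊕ Fin n}
    (hpq : N p q ≠ 0) : 0 < symplecticWeight n p + symplecticWeight n q := by
  rcases q with j | j
  · rcases p with i | i
    · simp only [symplecticWeight, Sum.elim_inl]
      omega
    · have : N (Sum.inl j) (Sum.inr i) ≠ 0 := by
        rw [show N (Sum.inl j) (Sum.inr i) = -N (Sum.inr i) (Sum.inl j) from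
          congrFun (congrFun hN _) _]
        exact neg_ne_zero.mpr hpq
      obtain ⟨i', hi, hi'⟩ := hcol _ _ this
      cases hi'
      simp only [symplecticWeight, Sum.elim_inl, Sum.elim_inr]
      omega
  · obtain ⟨i, hi, rfl⟩ := hcol p j hpq
    simp only [symplecticWeight, Sum.elim_inl, Sum.elim_inr]
    omega

variable {K : Type*} [Field K] {n : ℕ}

lemma basisFun_toMatrix_mem_symplecticGroup {b : Basis (Fin n ⊕ Fin n) K (Fin n ⊕ Fin n → K)}
    (hb : LinearMap.BilinForm.toMatrix b (toBilin' (J (Fin n) K)) = J (Fin n) K) :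
    (Pi.basisFun K _).toMatrix b ∈ symplecticGroup (Fin n) K := by
  rw [SymplecticGroup.mem_iff']
  have := LinearMap.BilinForm.toMatrix_mul_basis_toMatrix (Pi.basisFun K _) b
    (toBilin' (J (Fin n) K))
  rwa [LinearMap.BilinForm.toMatrix_basisFun, LinearMap.BilinForm.toMatrix'_toBilin', hb] at this

lemma toMatrix_basisFun_conj_apply_inr {b : Basis (Fin n ⊕ Fin n) K (Fin n ⊕ Fin n → K)}
    (hb : LinearMap.BilinForm.toMatrix b (toBilin' (J (Fin n) K)) = J (Fin n) K)
    (M : Matrix (Fin n ⊕ Fin n) (Fin n ⊕ Fin n) K) (p : Fin n ⊕ Fin n) (j : Fin n) :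
    (b.toMatrix (Pi.basisFun K _) * M * (b.toMatrix (Pi.basisFun K _))ᵀ) p (Sum.inr j) =
      b.repr ((M * J (Fin n) K) *ᵥ b (Sum.inl j)) p := by
  set g := (Pi.basisFun K (Fin n ⊕ Fin n)).toMatrix b
  set h := b.toMatrix (Pi.basisFun K (Fin n ⊕ Fin n))
  have hhJ : hᵀ * J (Fin n) K = J (Fin n) K * g :=
    calc hᵀ * J (Fin n) K = (g * h)ᵀ * J (Fin n) K * g := by
          rw [transpose_mul, Matrix.mul_assoc, Matrix.mul_assoc, ← Matrix.mul_assoc gᵀ,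
            SymplecticGroup.mem_iff'.mp (basisFun_toMatrix_mem_symplecticGroup hb)]
      _ = J (Fin n) K * g := by
          rw [Basis.toMatrix_mul_toMatrix_flip, transpose_one, Matrix.one_mul]
  have hh : ∀ x, h *ᵥ x = b.repr x := fun x =>
    funext (Pi.basisFun_repr K _ x) ▸ (Pi.basisFun K _).toMatrix_mulVec_repr b x
  have hg : g *ᵥ Pi.single (Sum.inl j) 1 = b (Sum.inl j) := by
    ext r; simp [g, Basis.toMatrix_apply]
  have hconj : h * M * hᵀ * J (Fin n) K = h * (M * J (Fin n) K) * g := by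
    simp only [Matrix.mul_assoc, hhJ]
  rw [← mul_J_apply_inl (h * M * hᵀ), hconj, ← hg, ← hh, mulVec_mulVec, mulVec_mulVec,
    mulVec_single_one]
  rfl

variable [NeZero (2 : K)]

theorem exists_symplectic_basis_of_isNilpotent_mul_J
    {M : Matrix (Fin n ⊕ Fin n) (Fin n ⊕ Fin n) K} (hM : Mᵀ = -M)
    (hnil : IsNilpotent (M * J (Fin n) K)) (v : Fin n ⊕ Fin n → K) :
    ∃ b : Basis (Fin n ⊕ Fin n) K (Fin n ⊕ Fin n → K),
      LinearMap.BilinForm.toMatrix b (toBilin' (J (Fin n) K)) = J (Fin n) K ∧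
      (∀ p, b.repr v p ≠ 0 → ∃ i, p = Sum.inl i) ∧
      ∀ j p, b.repr ((M * J (Fin n) K) *ᵥ b (Sum.inl j)) p ≠ 0 → ∃ i, j < i ∧ p = Sum.inl i := by
  have hJ : (J (Fin n) K)ᵀ = -J (Fin n) K := J_transpose _ _
  have hBnd := LinearMap.BilinForm.nondegenerate_toBilin'_of_det_ne_zero' _
    (isUnit_det_J (Fin n) K).ne_zero
  have hA : LinearMap.IsAdjointPair (toBilin' (J (Fin n) K)) (toBilin' (J (Fin n) K))
      (toLin' (M * J (Fin n) K)) (toLin' (M * J (Fin n) K)) :=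
    (isAdjointPair_toLinearMap₂' _ _ _ _).mpr (by
      simp [Matrix.IsAdjointPair, transpose_mul, hJ, hM, Matrix.mul_assoc])
  obtain ⟨k, e, he, hk, hv⟩ := LinearMap.BilinForm.exists_isIsotropicFlag_two_mul_eq_finrank
    (isAlt_toBilin' hJ) hBnd hA ((isNilpotent_toLin'_iff _).mpr hnil) v
  obtain rfl : n = k := by
    simp only [finrank_fintype_fun_eq_card, Fintype.card_sum, Fintype.card_fin] at hk; omega
  obtain ⟨b, hbe, hbJ⟩ := LinearMap.BilinForm.exists_basis_toMatrix_eq_J (isAlt_toBilin' hJ)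
    hBnd (by simp; ring) he.linearIndependent he.isotropic
  have himage : ∀ s : Set (Fin n), e '' s = b '' (Sum.inl '' s) := fun s => by
    rw [Set.image_image]; simp [hbe]
  refine ⟨b, hbJ, fun p hp => ?_, fun j p hp => ?_⟩
  · rw [← Set.image_univ, himage, b.mem_span_image] at hv
    obtain ⟨i, -, rfl⟩ := hv (Finsupp.mem_support_iff.mpr hp)
    exact ⟨i, rfl⟩
  · have := he.apply_mem_span j
    rw [himage, b.mem_span_image] at this
    obtain ⟨i, hi, rfl⟩ := this (Finsupp.mem_support_iff.mpr (by simpa [hbe] using hp))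
    exact ⟨i, hi, rfl⟩

theorem exists_symplectic_conj_weight_pos {M : Matrix (Fin n ⊕ Fin n) (Fin n ⊕ Fin n) K}
    (hM : Mᵀ = -M) (hnil : IsNilpotent (M * J (Fin n) K)) (v : Fin n ⊕ Fin n → K) :
    ∃ g, g * J (Fin n) K * gᵀ = J (Fin n) K ∧ ∃ v₂ M₂, g *ᵥ v₂ = v ∧ g * M₂ * gᵀ = M ∧
      M₂ᵀ = -M₂ ∧ (∀ p, v₂ p ≠ 0 → 0 < symplecticWeight n p) ∧
      ∀ p q, M₂ p q ≠ 0 → 0 < symplecticWeight n p + symplecticWeight n q := by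
  obtain ⟨b, hbJ, hv, hA⟩ := exists_symplectic_basis_of_isNilpotent_mul_J hM hnil v
  set g := (Pi.basisFun K (Fin n ⊕ Fin n)).toMatrix b
  set h := b.toMatrix (Pi.basisFun K (Fin n ⊕ Fin n))
  have hgh : g * h = 1 := Basis.toMatrix_mul_toMatrix_flip _ _
  have hM₂ : (h * M * hᵀ)ᵀ = -(h * M * hᵀ) := by simp [transpose_mul, hM, Matrix.mul_assoc]
  refine ⟨g, SymplecticGroup.mem_iff.mp (basisFun_toMatrix_mem_symplecticGroup hbJ), b.repr v,
    h * M * hᵀ, (b.toMatrix_mulVec_repr _ v).trans (funext (Pi.basisFun_repr K _ v)), ?_, hM₂,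
    fun p hp => ?_, fun p q hpq => symplecticWeight_add_pos hM₂ (fun p j hpj => hA j p ?_) hpq⟩
  · rw [Matrix.mul_assoc, Matrix.mul_assoc, ← transpose_mul, hgh]
    simp [← Matrix.mul_assoc, hgh]
  · obtain ⟨i, rfl⟩ := hv p hp
    simp [symplecticWeight]
  · rwa [← toMatrix_basisFun_conj_apply_inr hbJ]

end Matrix

namespace MvPolynomial

theorem eval_eq_eval_zero_of_forall_zpow_mul {σ K : Type*} [Field K] [Infinite K]
    (P : MvPolynomial σ K) (x : σ → K) (w : σ → ℤ) (hw : ∀ s, x s ≠ 0 → 0 < w s)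
    (hP : ∀ t : K, t ≠ 0 → eval (fun s => t ^ w s * x s) P = eval x P) :
    eval x P = eval 0 P := by
  set F : Polynomial K := aeval (fun s => Polynomial.C (x s) * Polynomial.X ^ (w s).toNat) P
  have hF : ∀ t, F.eval t = eval (fun s => t ^ (w s).toNat * x s) P := fun t => by
    rw [← Polynomial.coe_aeval_eq_eval, comp_aeval_apply, ← aeval_eq_eval]
    simp only [map_mul, map_pow, Polynomial.aeval_C, Polynomial.aeval_X, Algebra.algebraMap_self,
      RingHom.id_apply, mul_comm]
  have hpow : ∀ t : K, t ≠ 0 → ∀ s, t ^ (w s).toNat * x s = t ^ w s * x s := fun t ht s => by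
    by_cases hs : x s = 0
    · simp [hs]
    · rw [← zpow_natCast, Int.toNat_of_nonneg (hw s hs).le]
  have hzero : ∀ s, (0 : K) ^ (w s).toNat * x s = 0 := fun s => by
    by_cases hs : x s = 0
    · simp [hs]
    · simp [zero_pow (by have := hw s hs; omega : (w s).toNat ≠ 0)]
  have hconst : F = Polynomial.C (eval x P) := by
    rw [← sub_eq_zero]
    refine Polynomial.eq_zero_of_infinite_isRoot _ ((Set.finite_singleton 0).infinite_compl.mono
      fun t ht => ?_)
    simp [hF, _root_.funext (hpow t ht), hP t ht]
  calc eval x P = F.eval 0 := by rw [hconst, Polynomial.eval_C]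
    _ = eval 0 P := by rw [hF, _root_.funext hzero]; rfl

end MvPolynomial

noncomputable def charpolyCoeffMulJ (R : Type*) [CommRing R] (n k : ℕ) :
    MvPolynomial ((Fin n ⊕ Fin n) ⊕ ((Fin n ⊕ Fin n) × (Fin n ⊕ Fin n))) R :=
  ((Matrix.of fun p q => MvPolynomial.X (Sum.inr (p, q))) *
    (J (Fin n) R).map MvPolynomial.C).charpoly.coeff k

lemma eval_charpolyCoeffMulJ {R : Type*} [CommRing R] {n : ℕ} (k : ℕ)
    (x : (Fin n ⊕ Fin n) ⊕ ((Fin n ⊕ Fin n) × (Fin n ⊕ Fin n)) → R) :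
    MvPolynomial.eval x (charpolyCoeffMulJ R n k) =
      ((Matrix.of fun p q => x (Sum.inr (p, q))) * J (Fin n) R).charpoly.coeff k := by
  rw [charpolyCoeffMulJ, ← Polynomial.coeff_map, ← charpoly_map, Matrix.map_mul, Matrix.map_map]
  congr 3
  · ext; simp
  · ext; simp

def IsSpInvariant {R : Type*} [CommRing R] {n : ℕ}
    (P : MvPolynomial ((Fin n ⊕ Fin n) ⊕ ((Fin n ⊕ Fin n) × (Fin n ⊕ Fin n))) R) : Prop :=
  ∀ g : Matrix (Fin n ⊕ Fin n) (Fin n ⊕ Fin n) R, g * J (Fin n) R * gᵀ = J (Fin n) R →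
    ∀ (w : Fin n ⊕ Fin n → R) (Y : Matrix (Fin n ⊕ Fin n) (Fin n ⊕ Fin n) R),
      Yᵀ = -Y → (∀ i, Y i i = 0) →
      MvPolynomial.eval (Sum.elim (g *ᵥ w) fun p => (g * Y * gᵀ) p.1 p.2) P =
        MvPolynomial.eval (Sum.elim w fun p => Y p.1 p.2) P

lemma isSpInvariant_charpolyCoeffMulJ_sub_C {R : Type*} [CommRing R] (n k : ℕ) (c : R) :
    IsSpInvariant (charpolyCoeffMulJ R n k - MvPolynomial.C c) := fun g hg w Y _ _ => by
  simp only [map_sub, MvPolynomial.eval_C, eval_charpolyCoeffMulJ]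
  exact congrArg (Polynomial.coeff · k - c) (charpoly_mul_J_conj hg Y)

theorem isNilpotent_mul_J_of_forall_isSpInvariant {R : Type*} [CommRing R] {n : ℕ}
    {v : Fin n ⊕ Fin n → R} {M : Matrix (Fin n ⊕ Fin n) (Fin n ⊕ Fin n) R}
    (h : ∀ P, IsSpInvariant P → MvPolynomial.eval 0 P = 0 →
      MvPolynomial.eval (Sum.elim v fun p => M p.1 p.2) P = 0) :
    IsNilpotent (M * J (Fin n) R) := by
  have hcoeff : ∀ k, (M * J (Fin n) R).charpoly.coeff k =
      MvPolynomial.eval 0 (charpolyCoeffMulJ R n k) := fun k => by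
    have := h _ (isSpInvariant_charpolyCoeffMulJ_sub_C n k _)
      (by rw [map_sub, MvPolynomial.eval_C, sub_self])
    rwa [map_sub, MvPolynomial.eval_C, sub_eq_zero, eval_charpolyCoeffMulJ] at this
  have hchar : (M * J (Fin n) R).charpoly = Polynomial.X ^ Fintype.card (Fin n ⊕ Fin n) := by
    ext k
    rw [hcoeff, eval_charpolyCoeffMulJ, ← charpoly_zero, ← Matrix.zero_mul (J (Fin n) R)]
    rfl
  exact ⟨_, by simpa [hchar] using aeval_self_charpoly (M * J (Fin n) R)⟩

theorem eval_eq_zero_of_isNilpotent_mul_J {K : Type*} [Field K] [Infinite K] [NeZero (2 : K)]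
    {n : ℕ} {v : Fin n ⊕ Fin n → K} {M : Matrix (Fin n ⊕ Fin n) (Fin n ⊕ Fin n) K}
    (hM : Mᵀ = -M) (hnil : IsNilpotent (M * J (Fin n) K)) {P} (hP : IsSpInvariant P)
    (hP0 : MvPolynomial.eval 0 P = 0) :
    MvPolynomial.eval (Sum.elim v fun p => M p.1 p.2) P = 0 := by
  obtain ⟨g, hg, v₂, M₂, rfl, rfl, hM₂, hv₂, hM₂w⟩ := exists_symplectic_conj_weight_pos hM hnil v
  have hdiag : ∀ p, M₂ p p = 0 := fun p => eq_zero_of_eq_neg (congrFun (congrFun hM₂ p) p)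
  rw [hP g hg v₂ M₂ hM₂ hdiag, ← hP0]
  refine MvPolynomial.eval_eq_eval_zero_of_forall_zpow_mul P _
    (Sum.elim (symplecticWeight n) fun pq => symplecticWeight n pq.1 + symplecticWeight n pq.2)
    (by rintro (p | ⟨p, q⟩) hs; exacts [hv₂ p hs, hM₂w p q hs]) fun t ht => ?_
  rw [← hP _ (SymplecticGroup.mem_iff.mp (diagonal_zpow_symplecticWeight_mem ht)) v₂ M₂ hM₂ hdiag]
  refine congrArg (MvPolynomial.eval · P) (funext ?_)
  rintro (p | ⟨p, q⟩)
  · simp [mulVec_diagonal]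
  · simp only [Sum.elim_inr, zpow_add₀ ht, diagonal_transpose, mul_diagonal, diagonal_mul]
    ring

theorem pair_mem_hilbert_nilcone_iff_nilpotent_general {n : ℕ}
    (v : Fin n ⊕ Fin n → ℂ)
    (M : Matrix (Fin n ⊕ Fin n) (Fin n ⊕ Fin n) ℂ)
    (hMalt : Mᵀ = -M) :
    (∀ P : MvPolynomial ((Fin n ⊕ Fin n) ⊕ ((Fin n ⊕ Fin n) × (Fin n ⊕ Fin n))) ℂ,
        (∀ g : Matrix (Fin n ⊕ Fin n) (Fin n ⊕ Fin n) ℂ,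
          g * Jmat n ℂ * gᵀ = Jmat n ℂ →
          ∀ (w : Fin n ⊕ Fin n → ℂ) (Y : Matrix (Fin n ⊕ Fin n) (Fin n ⊕ Fin n) ℂ),
            Yᵀ = -Y → (∀ i, Y i i = 0) →
            MvPolynomial.eval
              (Sum.elim (g.mulVec w) (fun p => (g * Y * gᵀ) p.1 p.2)) P =
            MvPolynomial.eval (Sum.elim w (fun p => Y p.1 p.2)) P) →
        MvPolynomial.eval (fun _ => (0 : ℂ)) P = 0 →
        MvPolynomial.eval (Sum.elim v (fun p => M p.1 p.2)) P = 0) ↔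
    IsNilpotent (M * Jmat n ℂ) :=
  ⟨fun h => isNilpotent_mul_J_of_forall_isSpInvariant fun P hP hP0 => h P hP hP0,
    fun hnil _ hP hP0 => eval_eq_zero_of_isNilpotent_mul_J hMalt hnil hP hP0⟩

/-- For `v ∈ ℂ^{2n}` and an alternating `2n×2n` complex matrix `M`, every
`Sp(2n,ℂ)`-invariant polynomial function on `ℂ^{2n} × {alternating matrices}`
vanishing at `(0,0)` vanishes at `(v, M)` if and only if `M·J` is nilpotent.
Thus the Hilbert nilcone of `𝕍 = ℂ^{2n} ⊕ ∧²ℂ^{2n}` is, as a set,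
`ℂ^{2n} × {X alternating : X·J nilpotent}`. -/
theorem pair_mem_hilbert_nilcone_iff_nilpotent {n : ℕ} (hn : 1 ≤ n)
    (v : Fin n ⊕ Fin n → ℂ)
    (M : Matrix (Fin n ⊕ Fin n) (Fin n ⊕ Fin n) ℂ)
    (hMalt : Mᵀ = -M) (hMdiag : ∀ i, M i i = 0) :
    (∀ P : MvPolynomial ((Fin n ⊕ Fin n) ⊕ ((Fin n ⊕ Fin n) × (Fin n ⊕ Fin n))) ℂ,
        (∀ g : Matrix (Fin n ⊕ Fin n) (Fin n ⊕ Fin n) ℂ,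
          g * Jmat n ℂ * gᵀ = Jmat n ℂ →
          ∀ (w : Fin n ⊕ Fin n → ℂ) (Y : Matrix (Fin n ⊕ Fin n) (Fin n ⊕ Fin n) ℂ),
            Yᵀ = -Y → (∀ i, Y i i = 0) →
            MvPolynomial.eval
              (Sum.elim (g.mulVec w) (fun p => (g * Y * gᵀ) p.1 p.2)) P =
            MvPolynomial.eval (Sum.elim w (fun p => Y p.1 p.2)) P) →
        MvPolynomial.eval (fun _ => (0 : ℂ)) P = 0 →
        MvPolynomial.eval (Sum.elim v (fun p => M p.1 p.2)) P = 0) ↔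
    IsNilpotent (M * Jmat n ℂ) :=
  pair_mem_hilbert_nilcone_iff_nilpotent_general v M hMalt
end

section
/- For every v ∈ ℂ^{2n} and every alternating 2n×2n complex matrix X, there exists g ∈ Sp(2n, ℂ) such that the vector gv has its last n coordinates equal to zero and the matrix g X gᵀ has (g X gᵀ)_{ij} = 0 for all n < i, j ≤ 2n (i.e., its lower-right n×n block vanishes). -/
open Matrix

/-!
Write `B x y = x ⬝ᵥ J *ᵥ y` for the symplectic form and `T = -J M`. Since `M` is alternating, `T`
is `B`-self-adjoint, and `B x (T y) = x ⬝ᵥ M *ᵥ y`. The rows of a symplectic `g` form a symplectic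
basis, so it suffices to find a `T`-invariant Lagrangian `W` containing `u = -J v` (then
`B w u = w ⬝ᵥ v`) and to take the last `n` rows of `g` in `W`.

The Krylov space of `u` under `T` is `T`-invariant and isotropic, because `B x (T ^ k x) = 0` for
the self-adjoint `T ^ k` and alternating `B`. A maximal `T`-invariant isotropic `W` containing it is
Lagrangian: otherwise `W < Wᗮ`, both are `T`-invariant, and an eigenvector of `T` on `Wᗮ / W`
(`ℂ` is algebraically closed) would enlarge `W`. A basis of `W` is then completed to a symplectic
basis in the usual way.
-/

open Module Submodule

namespace Module.End

variable {K V : Type*} [Field K] [AddCommGroup V] [Module K V] {T : End K V}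

theorem span_range_pow_apply_mem_invtSubmodule (u : V) :
    span K (Set.range fun k : ℕ => (T ^ k) u) ∈ T.invtSubmodule := by
  rw [mem_invtSubmodule_iff_map_le, map_span, span_le]
  rintro _ ⟨_, ⟨k, rfl⟩, rfl⟩
  exact subset_span ⟨k + 1, by simp only [pow_succ', mul_apply]⟩

theorem exists_mem_notMem_sup_span_singleton_mem_invtSubmodule [IsAlgClosed K]
    [FiniteDimensional K V] {W U : Submodule K V} (hW : W ∈ T.invtSubmodule)
    (hU : U ∈ T.invtSubmodule) (hWU : W < U) :
    ∃ x ∈ U, x ∉ W ∧ W ⊔ K ∙ x ∈ T.invtSubmodule := by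
  set W' := W.comap U.subtype
  have hW' : W' ≤ W'.comap (T.restrict hU) := fun x hx => hW hx
  have : Nontrivial (U ⧸ W') :=
    Submodule.Quotient.nontrivial_iff.2 fun h => hWU.not_ge (comap_subtype_eq_top.1 h)
  obtain ⟨μ, hμ⟩ := exists_eigenvalue (W'.mapQ W' _ hW')
  obtain ⟨z, hz⟩ := hμ.exists_hasEigenvector
  obtain ⟨x, rfl⟩ := W'.mkQ_surjective z
  have hxW : (x : V) ∉ W := fun h => hz.2 ((Submodule.Quotient.mk_eq_zero _).2 h)
  have hTμ : T x - μ • (x : V) ∈ W := by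
    have h := hz.apply_eq_smul
    rw [mkQ_apply, mapQ_apply, ← Submodule.Quotient.mk_smul, Submodule.Quotient.eq] at h
    exact h
  have hTx : T x ∈ W ⊔ K ∙ (x : V) := by
    rw [← sub_add_cancel (T x) (μ • (x : V))]
    exact add_mem (mem_sup_left hTμ) (mem_sup_right (smul_mem _ _ (mem_span_singleton_self _)))
  refine ⟨x, x.2, hxW, ?_⟩
  rw [mem_invtSubmodule_iff_map_le, Submodule.map_sup, sup_le_iff]
  refine ⟨((mem_invtSubmodule_iff_map_le T).1 hW).trans le_sup_left, ?_⟩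
  rwa [map_le_iff_le_comap, span_singleton_le_iff_mem]

end Module.End

namespace LinearMap.BilinForm

variable {K V : Type*} [Field K] [AddCommGroup V] [Module K V]
  {B : LinearMap.BilinForm K V} {T : Module.End K V}

theorem _root_.LinearMap.IsSelfAdjoint.pow (hT : B.IsSelfAdjoint T) (k : ℕ) :
    B.IsSelfAdjoint ⇑(T ^ k) := by
  induction k with
  | zero => exact isAdjointPair_one
  | succ k ih =>
    have h := ih.mul hT
    rwa [← pow_succ, ← pow_succ'] at h

theorem IsAlt.apply_apply_self_eq_zero [NeZero (2 : K)] (hB : B.IsAlt)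
    (hT : B.IsSelfAdjoint T) (x : V) : B x (T x) = 0 := by
  have h := LinearMap.IsAlt.neg hB (T x) x
  rw [hT] at h
  have h2 : (2 : K) * B x (T x) = 0 := by linear_combination -h
  exact (mul_eq_zero.1 h2).resolve_left two_ne_zero

theorem span_le_orthogonal_span {s : Set V} (h : ∀ x ∈ s, ∀ y ∈ s, B x y = 0) :
    span K s ≤ B.orthogonal (span K s) :=
  span_le.2 fun y hy _ hx =>
    (span_le (p := LinearMap.ker (B.flip y)).2 fun x' hx' => h x' hx' y hy) hx

theorem sup_span_singleton_le_orthogonal (hB : B.IsAlt) {W : Submodule K V}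
    (hW : W ≤ B.orthogonal W) {x : V} (hx : x ∈ B.orthogonal W) :
    W ⊔ K ∙ x ≤ B.orthogonal (W ⊔ K ∙ x) := by
  rw [← span_eq W, ← span_union]
  refine span_le_orthogonal_span ?_
  rintro y (hy | hy) z (hz | hz)
  · exact hW hz y hy
  · rw [Set.mem_singleton_iff.1 hz]
    exact hx y hy
  · rw [Set.mem_singleton_iff.1 hy]
    exact hB.isRefl _ _ (hx z hz)
  · rw [Set.mem_singleton_iff.1 hy, Set.mem_singleton_iff.1 hz]
    exact hB.self_eq_zero x

theorem orthogonal_mem_invtSubmodule (hT : B.IsSelfAdjoint T) {W : Submodule K V}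
    (hW : W ∈ T.invtSubmodule) : B.orthogonal W ∈ T.invtSubmodule := fun x hx w hw => by
  simpa only [hT w x] using hx (T w) (hW hw)

theorem span_range_pow_apply_le_orthogonal [NeZero (2 : K)] (hB : B.IsAlt)
    (hT : B.IsSelfAdjoint T) (u : V) :
    span K (Set.range fun k : ℕ => (T ^ k) u) ≤
      B.orthogonal (span K (Set.range fun k : ℕ => (T ^ k) u)) := by
  refine span_le_orthogonal_span ?_
  rintro _ ⟨i, rfl⟩ _ ⟨j, rfl⟩
  rw [hT.pow i, ← Module.End.mul_apply, ← pow_add]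
  exact hB.apply_apply_self_eq_zero (hT.pow _) u

theorem exists_le_orthogonal_eq_self_mem_invtSubmodule [IsAlgClosed K] [FiniteDimensional K V]
    (hB : B.IsAlt) (hT : B.IsSelfAdjoint T) {W₀ : Submodule K V} (hW₀T : W₀ ∈ T.invtSubmodule)
    (hW₀ : W₀ ≤ B.orthogonal W₀) :
    ∃ W, W₀ ≤ W ∧ W ∈ T.invtSubmodule ∧ B.orthogonal W = W := by
  obtain ⟨W, ⟨hW₀W, hWT, hW⟩, hmax⟩ := wellFounded_gt.has_min
    {W | W₀ ≤ W ∧ W ∈ T.invtSubmodule ∧ W ≤ B.orthogonal W} ⟨W₀, le_rfl, hW₀T, hW₀⟩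
  refine ⟨W, hW₀W, hWT, ?_⟩
  by_contra hne
  obtain ⟨x, hx, hxW, hxT⟩ := Module.End.exists_mem_notMem_sup_span_singleton_mem_invtSubmodule
    hWT (orthogonal_mem_invtSubmodule hT hWT) (lt_of_le_of_ne hW (Ne.symm hne))
  exact hmax _ ⟨hW₀W.trans le_sup_left, hxT, sup_span_singleton_le_orthogonal hB hW hx⟩
    (left_lt_sup.2 fun h => hxW (h (mem_span_singleton_self x)))

theorem apply_eq_zero_of_orthogonal_eq_self {W : Submodule K V} (hW : B.orthogonal W = W)
    {x y : V} (hx : x ∈ W) (hy : y ∈ W) : B x y = 0 := by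
  rw [← hW] at hy
  exact hy x hx

theorem two_mul_finrank_eq_of_orthogonal_eq_self [FiniteDimensional K V] (hB : B.Nondegenerate)
    {W : Submodule K V} (hW : B.orthogonal W = W) : 2 * finrank K W = finrank K V := by
  have h := finrank_orthogonal hB W
  rw [hW] at h
  have := W.finrank_le
  omega

theorem Nondegenerate.exists_dual_family [FiniteDimensional K V] (hB : B.Nondegenerate)
    {ι : Type*} [DecidableEq ι] {b : ι → V} (hb : LinearIndependent K b) :
    ∃ a : ι → V, ∀ i j, B (b i) (a j) = if i = j then 1 else 0 := by
  refine ⟨fun j => (B.flip.toDual hB.flip).symm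
    (Subspace.dualLift _ ((Basis.span hb).coord j)), fun i j => ?_⟩
  have hbi : b i = (Basis.span hb i : span K (Set.range b)) := by rw [Basis.span_apply]
  change B.flip _ (b i) = _
  rw [apply_toDual_symm_apply, hbi, Subspace.dualLift_of_subtype, Basis.coord_apply,
    Basis.repr_self, Finsupp.single_apply]

theorem exists_isotropic_dual_family [FiniteDimensional K V] [NeZero (2 : K)]
    (hB : B.Nondegenerate) (hAlt : B.IsAlt) {ι : Type*} [Fintype ι] [DecidableEq ι] {b : ι → V}
    (hb : LinearIndependent K b) (hbb : ∀ i j, B (b i) (b j) = 0) :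
    ∃ a : ι → V, (∀ i j, B (a i) (a j) = 0) ∧ ∀ i j, B (b i) (a j) = if i = j then 1 else 0 := by
  obtain ⟨a, ha⟩ := hB.exists_dual_family hb
  have ha' : ∀ i j, B (a i) (b j) = -if j = i then 1 else 0 := fun i j => by
    rw [← ha, LinearMap.IsAlt.neg hAlt]
  -- `B (s i) (a j) = B (a i) (s j) = B (a i) (a j)` and `B (s i) (s j) = 0`, so `a - s / 2` works.
  set s : ι → V := fun j => ∑ k, B (a j) (a k) • b k
  have hsb : ∀ i y, B (s i) y = ∑ k, B (a i) (a k) * B (b k) y := fun i y => by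
    simp only [s, map_sum, map_smul, LinearMap.sum_apply, LinearMap.smul_apply, smul_eq_mul]
  have hbs : ∀ i j, B (b i) (s j) = 0 := fun i j => by
    simp only [s, map_sum, map_smul, hbb, smul_zero, Finset.sum_const_zero]
  have has : ∀ i j, B (a i) (s j) = B (a i) (a j) := fun i j => by
    simp only [s, map_sum, map_smul, ha', smul_eq_mul, mul_neg, mul_ite, mul_one, mul_zero,
      Finset.sum_neg_distrib, Finset.sum_ite_eq', Finset.mem_univ, if_true]
    exact LinearMap.IsAlt.neg hAlt _ _
  refine ⟨fun j => a j - (2 : K)⁻¹ • s j, fun i j => ?_, fun i j => ?_⟩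
  · simp only [map_sub, map_smul, LinearMap.sub_apply, LinearMap.smul_apply, smul_eq_mul, hsb,
      ha, hbs, has, mul_ite, mul_one, mul_zero, Finset.sum_ite_eq', Finset.mem_univ, if_true,
      Finset.sum_const_zero]
    field_simp
    ring
  · simp [hbs, ha]

end LinearMap.BilinForm

namespace Matrix

variable {l R : Type*} [Fintype l] [DecidableEq l] [CommRing R]

theorem dotProduct_mulVec_eq_neg_of_transpose_eq_neg {m : Type*} [Fintype m]
    {N : Matrix m m R} (hN : Nᵀ = -N) (x y : m → R) : x ⬝ᵥ N *ᵥ y = -(y ⬝ᵥ N *ᵥ x) := by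
  rw [dotProduct_mulVec, ← mulVec_transpose, hN, neg_mulVec, neg_dotProduct, dotProduct_comm]

theorem mul_mul_transpose_apply {m : Type*} [Fintype m] [DecidableEq m] (g N : Matrix m m R)
    (p q : m) :
    (g * N * gᵀ) p q = toBilin' N (g p) (g q) := by
  rw [mul_mul_apply, transpose_transpose, toBilin'_apply']

theorem isAlt_toBilin'_J : (toBilin' (J l R)).IsAlt := fun x => by
  simp [toBilin'_apply', J, dotProduct, Fintype.sum_sum_type, mulVec, fromBlocks, one_apply,
    mul_comm]

theorem toBilin'_J_apply_mulVec (M : Matrix (l ⊕ l) (l ⊕ l) R) (x y : l ⊕ l → R) :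
    toBilin' (J l R) x ((-J l R * M) *ᵥ y) = x ⬝ᵥ M *ᵥ y := by
  rw [toBilin'_apply', mulVec_mulVec, ← Matrix.mul_assoc, Matrix.mul_neg, J_squared, neg_neg,
    Matrix.one_mul]

theorem isSelfAdjoint_toLin'_neg_J_mul {M : Matrix (l ⊕ l) (l ⊕ l) R} (hM : Mᵀ = -M) :
    (toBilin' (J l R)).IsSelfAdjoint (toLin' (-J l R * M)) := fun x y => by
  rw [toLin'_apply, toLin'_apply, toBilin'_J_apply_mulVec, toBilin'_apply',
    dotProduct_mulVec_eq_neg_of_transpose_eq_neg (J_transpose l R), ← toBilin'_apply',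
    toBilin'_J_apply_mulVec, dotProduct_mulVec_eq_neg_of_transpose_eq_neg hM, neg_neg]

theorem nondegenerate_toBilin'_J {K : Type*} [Field K] : (toBilin' (J l K)).Nondegenerate :=
  LinearMap.BilinForm.nondegenerate_toBilin'_iff_det_ne_zero.2 (isUnit_det_J l K).ne_zero

open LinearMap.BilinForm in
theorem exists_mem_symplecticGroup_forall_inr_mem {K : Type*} [Field K] [NeZero (2 : K)]
    {W : Submodule K (l ⊕ l → K)} (hW : (toBilin' (J l K)).orthogonal W = W) :
    ∃ g ∈ symplecticGroup l K, ∀ i, g (Sum.inr i) ∈ W := by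
  set B := toBilin' (J l K)
  have hB : B.IsAlt := isAlt_toBilin'_J
  have hWdim : finrank K W = Fintype.card l := by
    have := two_mul_finrank_eq_of_orthogonal_eq_self nondegenerate_toBilin'_J hW
    simp only [finrank_fintype_fun_eq_card, Fintype.card_sum] at this
    omega
  let b := (finBasisOfFinrankEq K W hWdim).reindex (Fintype.equivFin l).symm
  obtain ⟨a, haa, hba⟩ := exists_isotropic_dual_family nondegenerate_toBilin'_J hB
    (b := fun i => b i) (b.linearIndependent.map' W.subtype W.ker_subtype)
    fun i j => apply_eq_zero_of_orthogonal_eq_self hW (b i).2 (b j).2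
  have hab : ∀ i j, B (a i) (b j) = -if j = i then 1 else 0 := fun i j => by
    rw [← hba, LinearMap.IsAlt.neg hB]
  refine ⟨of (Sum.elim a fun i => b i), SymplecticGroup.mem_iff.2 ?_, fun i => (b i).2⟩
  ext (i | i) (j | j) <;> rw [mul_mul_transpose_apply]
  · exact (haa i j).trans (by simp [J])
  · exact (hab i j).trans (by simp [J, one_apply, eq_comm])
  · exact (hba i j).trans (by simp [J, one_apply])
  · exact (apply_eq_zero_of_orthogonal_eq_self hW (b i).2 (b j).2).trans (by simp [J])

end Matrix

open LinearMap.BilinForm in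
theorem exists_symplectic_normalizer_general {n : ℕ}
    (v : Fin n ⊕ Fin n → ℂ)
    (M : Matrix (Fin n ⊕ Fin n) (Fin n ⊕ Fin n) ℂ)
    (hMalt : Mᵀ = -M) :
    ∃ g : Matrix (Fin n ⊕ Fin n) (Fin n ⊕ Fin n) ℂ,
      g * Jmat n ℂ * gᵀ = Jmat n ℂ ∧
      (∀ i : Fin n, g.mulVec v (Sum.inr i) = 0) ∧
      (∀ i j : Fin n, (g * M * gᵀ) (Sum.inr i) (Sum.inr j) = 0) := by
  set B := toBilin' (J (Fin n) ℂ)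
  set T := toLin' (-J (Fin n) ℂ * M)
  have hT : B.IsSelfAdjoint T := isSelfAdjoint_toLin'_neg_J_mul hMalt
  set u := -J (Fin n) ℂ *ᵥ v
  have hu : ∀ x, B x u = x ⬝ᵥ v := fun x => by
    simp only [B, u, toBilin'_apply', mulVec_mulVec, Matrix.mul_neg, J_squared, neg_neg, one_mulVec]
  obtain ⟨W, huW, hWT, hW⟩ := exists_le_orthogonal_eq_self_mem_invtSubmodule isAlt_toBilin'_J hT
    (End.span_range_pow_apply_mem_invtSubmodule u)
    (span_range_pow_apply_le_orthogonal isAlt_toBilin'_J hT u)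
  obtain ⟨g, hg, hgW⟩ := exists_mem_symplecticGroup_forall_inr_mem hW
  refine ⟨g, SymplecticGroup.mem_iff.1 hg, fun i => ?_, fun i j => ?_⟩
  · exact (hu _).symm.trans
      (apply_eq_zero_of_orthogonal_eq_self hW (hgW i) (huW (subset_span ⟨0, by simp⟩)))
  · rw [mul_mul_transpose_apply, toBilin'_apply']
    exact (toBilin'_J_apply_mulVec M _ _).symm.trans
      (apply_eq_zero_of_orthogonal_eq_self hW (hgW i) (hWT (hgW j)))

/-- For every `v ∈ ℂ^{2n}` and every alternating `2n×2n` complex matrix `M`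
there exists `g ∈ Sp(2n, ℂ)` such that `gv` has its last `n` coordinates zero
and the lower-right `n×n` block of `g M gᵀ` vanishes. -/
theorem exists_symplectic_normalizer {n : ℕ} (hn : 1 ≤ n)
    (v : Fin n ⊕ Fin n → ℂ)
    (M : Matrix (Fin n ⊕ Fin n) (Fin n ⊕ Fin n) ℂ)
    (hMalt : Mᵀ = -M) (hMdiag : ∀ i, M i i = 0) :
    ∃ g : Matrix (Fin n ⊕ Fin n) (Fin n ⊕ Fin n) ℂ,
      g * Jmat n ℂ * gᵀ = Jmat n ℂ ∧
      (∀ i : Fin n, g.mulVec v (Sum.inr i) = 0) ∧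
      (∀ i j : Fin n, (g * M * gᵀ) (Sum.inr i) (Sum.inr j) = 0) :=
  exists_symplectic_normalizer_general v M hMalt
end

section
/- Let k be a perfect field of characteristic two and m ≥ 1. Then the map (v, A) ↦ v vᵀ + A is a bijection from kᵐ × {alternating m×m matrices over k} onto the set of symmetric m×m matrices over k. Moreover it is equivariant: for any g ∈ Mat(m, k), (gv)(gv)ᵀ + g A gᵀ = g (v vᵀ + A) gᵀ. -/
/-! In characteristic two the diagonal of `v vᵀ + A`, with `A` alternating, is `(v i ^ 2)ᵢ`, so over
a perfect ring `v` is recovered from a symmetric matrix `S` as the entrywise square root of its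
diagonal, and then `A = S - v vᵀ`. -/

open Matrix

namespace Matrix

theorem vecMulVec_mulVec_mulVec {l m n o α : Type*} [Fintype m] [Fintype o] [CommSemiring α]
    (g : Matrix l m α) (h : Matrix n o α) (v : m → α) (w : o → α) :
    vecMulVec (g *ᵥ v) (h *ᵥ w) = g * vecMulVec v w * hᵀ := by
  rw [mul_vecMulVec, vecMulVec_mul, vecMul_transpose]

section CharTwo

variable {n R : Type*} [CommRing R] [CharP R 2] [PerfectRing R 2]

noncomputable def diagSqrt (S : Matrix n n R) : n → R :=
  fun i => (frobeniusEquiv R 2).symm (S i i)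

theorem diagSqrt_vecMulVec_self_add {v : n → R} {A : Matrix n n R} (hA : ∀ i, A i i = 0) :
    diagSqrt (vecMulVec v v + A) = v := by
  ext i
  simp [diagSqrt, vecMulVec_apply, hA i, ← sq, frobeniusEquiv_symm_pow]

theorem vecMulVec_diagSqrt_apply_self (S : Matrix n n R) (i : n) :
    vecMulVec (diagSqrt S) (diagSqrt S) i i = S i i := by
  rw [vecMulVec_apply, ← sq, diagSqrt, frobeniusEquiv_symm_pow_p]

theorem bijOn_vecMulVec_self_add :
    Set.BijOn (fun p : (n → R) × Matrix n n R => vecMulVec p.1 p.1 + p.2)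
      {p | p.2ᵀ = p.2 ∧ ∀ i, p.2 i i = 0} {S | Sᵀ = S} := by
  let decomp (S : Matrix n n R) : (n → R) × Matrix n n R :=
    (diagSqrt S, S - vecMulVec (diagSqrt S) (diagSqrt S))
  refine Set.InvOn.bijOn (f' := decomp) ⟨?leftInv, ?rightInv⟩ ?mapsTo ?mapsTo_decomp
  case leftInv =>
    rintro ⟨v, A⟩ ⟨-, hA⟩
    simp [decomp, diagSqrt_vecMulVec_self_add hA]
  case rightInv =>
    intro S _
    simp [decomp]
  case mapsTo =>
    rintro ⟨v, A⟩ ⟨hA, -⟩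
    simp [hA]
  case mapsTo_decomp =>
    intro S hS
    refine ⟨?_, fun i => ?_⟩
    · simp [decomp, show Sᵀ = S from hS]
    · simp [decomp, vecMulVec_diagSqrt_apply_self]

end CharTwo

end Matrix

theorem vecMulVec_add_alt_bijOn_symm_general {m : ℕ}
    {k : Type*} [Field k] [CharP k 2] [PerfectField k] :
    Set.BijOn
      (fun p : (Fin m → k) × Matrix (Fin m) (Fin m) k =>
        Matrix.vecMulVec p.1 p.1 + p.2)
      {p | p.2ᵀ = p.2 ∧ ∀ i, p.2 i i = 0}
      {S | Sᵀ = S} ∧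
    ∀ (g : Matrix (Fin m) (Fin m) k) (v : Fin m → k)
      (A : Matrix (Fin m) (Fin m) k),
      Matrix.vecMulVec (g.mulVec v) (g.mulVec v) + g * A * gᵀ =
        g * (Matrix.vecMulVec v v + A) * gᵀ :=
  ⟨bijOn_vecMulVec_self_add, fun g v A => by
    rw [Matrix.mul_add, Matrix.add_mul, vecMulVec_mulVec_mulVec]⟩

/-- Over a perfect field of characteristic two, `(v, A) ↦ v vᵀ + A` is a
bijection from `kᵐ × {alternating matrices}` onto the symmetric matrices, and
it is equivariant for the actions `(v, A) ↦ (gv, g A gᵀ)` and `S ↦ g S gᵀ`. -/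
theorem vecMulVec_add_alt_bijOn_symm {m : ℕ} (hm : 1 ≤ m)
    {k : Type*} [Field k] [CharP k 2] [PerfectField k] :
    Set.BijOn
      (fun p : (Fin m → k) × Matrix (Fin m) (Fin m) k =>
        Matrix.vecMulVec p.1 p.1 + p.2)
      {p | p.2ᵀ = p.2 ∧ ∀ i, p.2 i i = 0}
      {S | Sᵀ = S} ∧
    ∀ (g : Matrix (Fin m) (Fin m) k) (v : Fin m → k)
      (A : Matrix (Fin m) (Fin m) k),
      Matrix.vecMulVec (g.mulVec v) (g.mulVec v) + g * A * gᵀ =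
        g * (Matrix.vecMulVec v v + A) * gᵀ :=
  vecMulVec_add_alt_bijOn_symm_general
end

section
/- Let k be a field of characteristic two, v ∈ k^{2n}, and A an alternating 2n×2n matrix over k. Then the characteristic polynomial of the matrix (v vᵀ + A)·J equals the characteristic polynomial of A·J. In particular, (v vᵀ + A)·J is nilpotent if and only if A·J is nilpotent. -/
open Matrix

/-!
Since `J² = -1`, we have `t • 1 - M * J = -((M + t • J) * J)`, so over the fraction field of
`k[t]` the characteristic polynomial of `M * J` is `det (M + t • J)` up to the unit `± det J`.
For `M = v vᵀ + A` the matrix `B = A + t • J` is alternating and invertible, and the matrix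
determinant lemma gives `det (v vᵀ + B) = det B * (1 + vᵀ B⁻¹ v)`. With `w = B⁻¹ v` the
correction term is `(B w) ⬝ w = w ⬝ B w`, which vanishes because the quadratic form of an
alternating matrix is zero. In characteristic two a symmetric matrix with zero diagonal is
alternating.
-/

open Polynomial

instance {R : Type*} [CommRing R] [IsReduced R] : IsReduced R[X] :=
  ⟨fun _ hp => Polynomial.ext fun i => (Polynomial.isNilpotent_iff.mp hp i).eq_zero⟩

namespace Matrix

section Alternating

variable {m R S : Type*} [CommRing R] [CommRing S]

def IsAlternating (B : Matrix m m R) : Prop :=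
  Bᵀ = -B ∧ ∀ i, B i i = 0

namespace IsAlternating

variable {B C : Matrix m m R}

theorem add (hB : B.IsAlternating) (hC : C.IsAlternating) : (B + C).IsAlternating :=
  ⟨by rw [transpose_add, hB.1, hC.1, neg_add], fun i => by simp [hB.2 i, hC.2 i]⟩

theorem smul (hB : B.IsAlternating) (r : R) : (r • B).IsAlternating :=
  ⟨by rw [transpose_smul, hB.1, smul_neg], fun i => by simp [hB.2 i]⟩

theorem map (hB : B.IsAlternating) (f : R →+* S) : (B.map f).IsAlternating :=
  ⟨by rw [← transpose_map, hB.1, Matrix.map_neg _ (map_neg f)], fun i => by simp [hB.2 i]⟩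

variable [Fintype m]

theorem dotProduct_mulVec_self (hB : B.IsAlternating) (u : m → R) : u ⬝ᵥ B *ᵥ u = 0 := by
  have hskew : ∀ i j, B j i = -B i j := fun i j => congr_fun (congr_fun hB.1 i) j
  rw [show u ⬝ᵥ B *ᵥ u = ∑ p : m × m, u p.1 * B p.1 p.2 * u p.2 by
    simp [dotProduct, mulVec, Finset.mul_sum, Fintype.sum_prod_type, mul_assoc]]
  refine Finset.sum_involution (fun p _ => p.swap) (fun p _ => ?_) (fun p _ hp hswap => ?_)
    (fun _ _ => Finset.mem_univ _) (fun p _ => p.swap_swap)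
  · rw [Prod.fst_swap, Prod.snd_swap, hskew]
    ring
  · obtain ⟨i, j⟩ := p
    obtain rfl : j = i := congr_arg Prod.fst hswap
    simp [hB.2] at hp

variable [DecidableEq m]

theorem dotProduct_inv_mulVec_self (hB : B.IsAlternating) (hdet : IsUnit B.det) (u : m → R) :
    u ⬝ᵥ B⁻¹ *ᵥ u = 0 := by
  have hu : u = B *ᵥ (B⁻¹ *ᵥ u) := by rw [mulVec_mulVec, mul_nonsing_inv _ hdet, one_mulVec]
  nth_rewrite 1 [hu]
  rw [dotProduct_comm, hB.dotProduct_mulVec_self]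

theorem det_vecMulVec_self_add (hB : B.IsAlternating) (hdet : IsUnit B.det) (u : m → R) :
    (vecMulVec u u + B).det = B.det := by
  rw [add_comm, vecMulVec_eq Unit, det_add_replicateCol_mul_replicateRow hdet, Matrix.mul_assoc,
    ← replicateCol_mulVec, det_unique (1 + replicateRow Unit u * _), add_apply, one_apply_eq,
    replicateRow_mul_replicateCol_apply, hB.dotProduct_inv_mulVec_self hdet, add_zero, mul_one]

end IsAlternating

end Alternating

variable {m R : Type*} [Fintype m] [DecidableEq m] [CommRing R]

theorem isNilpotent_iff_charpoly [IsReduced R] (M : Matrix m m R) :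
    IsNilpotent M ↔ M.charpoly = X ^ Fintype.card m :=
  ⟨fun h => sub_eq_zero.mp (isNilpotent_charpoly_sub_pow_of_isNilpotent h).eq_zero,
    fun h => ⟨Fintype.card m, by simpa [h] using aeval_self_charpoly M⟩⟩

theorem algebraMap_charpoly {S : Type*} [CommRing S] [Algebra R S] [Algebra R[X] S]
    [IsScalarTower R R[X] S] (M : Matrix m m R) :
    algebraMap R[X] S M.charpoly =
      (scalar m (algebraMap R[X] S X) - M.map (algebraMap R S)).det := by
  rw [← eval_charpoly, charpoly_map, eval_map, ← aeval_def, aeval_algebraMap_apply,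
    aeval_X_left_apply]

theorem scalar_sub_mul_eq_neg {J : Matrix m m R} (hJ : J * J = -1) (M : Matrix m m R) (t : R) :
    scalar m t - M * J = -((M + t • J) * J) := by
  rw [add_mul, smul_mul, hJ, smul_neg, neg_add, neg_neg, scalar_apply, ← smul_one_eq_diagonal]
  abel

theorem charpoly_vecMulVec_add_mul [IsDomain R] {J A : Matrix m m R} (hJ : J * J = -1)
    (hJalt : J.IsAlternating) (hA : A.IsAlternating) (v : m → R) :
    ((vecMulVec v v + A) * J).charpoly = (A * J).charpoly := by
  let K := FractionRing R[X]
  let f := algebraMap R K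
  let t := algebraMap R[X] K X
  have hJK : J.map f * J.map f = -1 := by
    rw [← Matrix.map_mul, hJ, Matrix.map_neg _ (map_neg f),
      Matrix.map_one _ (map_zero f) (map_one f)]
  have hcharpoly : ∀ M : Matrix m m R, algebraMap R[X] K (M * J).charpoly =
      (-1) ^ Fintype.card m * ((M.map f + t • J.map f).det * (J.map f).det) := fun M => by
    rw [algebraMap_charpoly, Matrix.map_mul, scalar_sub_mul_eq_neg hJK, det_neg, det_mul]
  set B := A.map f + t • J.map f
  have hBalt : B.IsAlternating := (hA.map f).add ((hJalt.map f).smul t)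
  have hBdet : IsUnit B.det := by
    refine isUnit_iff_ne_zero.mpr fun h0 => (charpoly_monic (A * J)).ne_zero ?_
    apply IsFractionRing.injective R[X] K
    rw [hcharpoly, h0, zero_mul, mul_zero, map_zero]
  have hvK : (vecMulVec v v).map f = vecMulVec (f ∘ v) (f ∘ v) := by
    ext i j
    simp [vecMulVec_apply]
  apply IsFractionRing.injective R[X] K
  rw [hcharpoly, hcharpoly, Matrix.map_add _ (map_add f), hvK, add_assoc,
    hBalt.det_vecMulVec_self_add hBdet]

end Matrix

section Jmat

variable {R : Type*} [CommRing R]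

theorem Jmat_mul_self (n : ℕ) : Jmat n R * Jmat n R = -1 := by
  simp [Jmat, fromBlocks_multiply, ← fromBlocks_one, fromBlocks_neg]

theorem isAlternating_Jmat (n : ℕ) : (Jmat n R).IsAlternating :=
  ⟨by simp [Jmat, fromBlocks_transpose, fromBlocks_neg], fun i => by cases i <;> simp [Jmat]⟩

end Jmat

theorem charpoly_vecMulVec_add_alt_mul_J_general {n : ℕ}
    {k : Type*} [Field k] [CharP k 2]
    (v : Fin n ⊕ Fin n → k)
    (A : Matrix (Fin n ⊕ Fin n) (Fin n ⊕ Fin n) k)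
    (hAalt : Aᵀ = A) (hAdiag : ∀ i, A i i = 0) :
    ((Matrix.vecMulVec v v + A) * Jmat n k).charpoly = (A * Jmat n k).charpoly ∧
    (IsNilpotent ((Matrix.vecMulVec v v + A) * Jmat n k) ↔
      IsNilpotent (A * Jmat n k)) := by
  have hA : A.IsAlternating := ⟨by rw [hAalt]; ext i j; simp [CharTwo.neg_eq], hAdiag⟩
  have hchar := charpoly_vecMulVec_add_mul (Jmat_mul_self n) (isAlternating_Jmat n) hA v
  exact ⟨hchar, by rw [isNilpotent_iff_charpoly, isNilpotent_iff_charpoly, hchar]⟩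

/-- Over a field of characteristic two, for `v ∈ k^{2n}` and `A` alternating,
the characteristic polynomials of `(v vᵀ + A)·J` and `A·J` coincide; in
particular one is nilpotent iff the other is. -/
theorem charpoly_vecMulVec_add_alt_mul_J {n : ℕ} (hn : 1 ≤ n)
    {k : Type*} [Field k] [CharP k 2]
    (v : Fin n ⊕ Fin n → k)
    (A : Matrix (Fin n ⊕ Fin n) (Fin n ⊕ Fin n) k)
    (hAalt : Aᵀ = A) (hAdiag : ∀ i, A i i = 0) :
    ((Matrix.vecMulVec v v + A) * Jmat n k).charpoly = (A * Jmat n k).charpoly ∧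
    (IsNilpotent ((Matrix.vecMulVec v v + A) * Jmat n k) ↔
      IsNilpotent (A * Jmat n k)) :=
  charpoly_vecMulVec_add_alt_mul_J_general v A hAalt hAdiag
end

section
/- Let f ∈ ℂ[X₁, …, Xₙ] be a polynomial lying in the subalgebra ℂ[X₁², …, Xₙ²] generated by the squares of the variables. Then for all indices i ≠ j, the linear polynomial (X_i − X_j) divides f if and only if (X_i + X_j) divides f; moreover if X_i divides f then X_i² divides f. -/
/-!
Write `f = g(X₁², …, Xₙ²)`. The substitution `X_j ↦ -X_j` fixes `f` and exchanges `X_i - X_j`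
with `X_i + X_j`, so each divides `f` iff the other does. Every exponent of `X_i` occurring in
`f` is even, so if all of them are positive they are at least `2`.
-/

namespace MvPolynomial

variable {σ R : Type*}

section CommSemiring

variable [CommSemiring R]

theorem adjoin_range_X_pow_eq_range_expand (p : ℕ) :
    Algebra.adjoin R (Set.range fun i : σ => (X i : MvPolynomial σ R) ^ p) = (expand p).range :=
  Algebra.adjoin_range_eq_range_aeval R _

theorem X_pow_dvd_iff_le_of_mem_support {i : σ} {k : ℕ} {φ : MvPolynomial σ R} :
    X i ^ k ∣ φ ↔ ∀ m ∈ φ.support, k ≤ m i := by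
  rw [X_pow_eq_monomial, ← Ideal.mem_span_singleton,
    ← Set.image_singleton (f := fun s => monomial s (1 : R)), mem_ideal_span_monomial_image]
  simp [Finsupp.single_le_iff]

theorem X_pow_dvd_expand_of_X_dvd {p : ℕ} {i : σ} (φ : MvPolynomial σ R)
    (h : X i ∣ expand p φ) : X i ^ p ∣ expand p φ := by
  rw [← pow_one (X i), X_pow_dvd_iff_le_of_mem_support] at h
  rw [X_pow_dvd_iff_le_of_mem_support]
  intro m hm
  have hdvd : p ∣ m i := by
    by_contra hnot
    exact mem_support_iff.mp hm (coeff_expand_of_not_dvd φ hnot)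
  exact Nat.le_of_dvd (h m hm) hdvd

end CommSemiring

section CommRing

variable [CommRing R] [DecidableEq σ]

noncomputable def negVar (j : σ) : MvPolynomial σ R →ₐ[R] MvPolynomial σ R :=
  aeval (Function.update X j (-X j))

@[simp]
theorem negVar_X_self (j : σ) : negVar j (X j : MvPolynomial σ R) = -X j := by
  simp [negVar]

@[simp]
theorem negVar_X_of_ne {i j : σ} (h : i ≠ j) : negVar j (X i : MvPolynomial σ R) = X i := by
  simp [negVar, h]

theorem negVar_expand {p : ℕ} (hp : Even p) (j : σ) (φ : MvPolynomial σ R) :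
    negVar j (expand p φ) = expand p φ := by
  rw [← AlgHom.comp_apply]
  congr 1
  refine algHom_ext fun i => ?_
  obtain rfl | hij := eq_or_ne i j
  · simp [hp.neg_pow]
  · simp [hij]

theorem X_sub_X_dvd_iff_X_add_X_dvd_of_negVar_eq {i j : σ} (hij : i ≠ j)
    {φ : MvPolynomial σ R} (hφ : negVar j φ = φ) : X i - X j ∣ φ ↔ X i + X j ∣ φ := by
  constructor <;> intro h <;> simpa [hij, hφ, sub_eq_add_neg] using map_dvd (negVar j) h

end CommRing

end MvPolynomial

open MvPolynomial

/-- For `f ∈ ℂ[X₁², …, Xₙ²]`: for `i ≠ j`, `(X_i − X_j) ∣ f ↔ (X_i + X_j) ∣ f`;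
and if `X_i ∣ f` then `X_i² ∣ f`. -/
theorem divisibility_in_square_subalgebra {n : ℕ} (f : MvPolynomial (Fin n) ℂ)
    (hf : f ∈ Algebra.adjoin ℂ
      (Set.range fun i : Fin n => (MvPolynomial.X i : MvPolynomial (Fin n) ℂ) ^ 2)) :
    (∀ i j : Fin n, i ≠ j →
      ((MvPolynomial.X i - MvPolynomial.X j ∣ f) ↔
        (MvPolynomial.X i + MvPolynomial.X j ∣ f))) ∧
    (∀ i : Fin n, MvPolynomial.X i ∣ f → (MvPolynomial.X i : MvPolynomial (Fin n) ℂ) ^ 2 ∣ f) := by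
  rw [adjoin_range_X_pow_eq_range_expand] at hf
  obtain ⟨g, rfl⟩ := hf
  exact ⟨fun i j hij => X_sub_X_dvd_iff_X_add_X_dvd_of_negVar_eq hij (negVar_expand even_two j g),
    fun i => X_pow_dvd_expand_of_X_dvd g⟩
end
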